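/- arXiv:1412.7092 — 9 statements merged into one kernel-verified Lean document; each statement's English description precedes it below -/
import Mathlib

section
/- Let $\mathfrak{g}$ be a real Lie algebra with an abelian complex structure $J$. Then the commutator ideal $\mathfrak{g}'=[\mathfrak{g},\mathfrak{g}]$ is an abelian subalgebra of $\mathfrak{g}$. -/
set_option linter.unusedSectionVars false

section AuxACS

variable {L : Type*} [LieRing L] [LieAlgebra ℝ L] (J : L →ₗ[ℝ] L)

/-- The complexified bracket on `L × L` (a pair `(u, v)` represents `u + i v`). -/
private def cbr (a b : L × L) : L × L :=
  (⁅a.1, b.1⁆ - ⁅a.2, b.2⁆, ⁅a.1, b.2⁆ + ⁅a.2, b.1⁆)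

/-- `x - i J x`, an element of the `(1,0)` part. -/
private def Aelt (x : L) : L × L := (x, -(J x))

/-- `x + i J x`, an element of the `(0,1)` part. -/
private def Belt (x : L) : L × L := (x, J x)

/-- The `A`-coordinate of the decomposition `c = Aelt (uA c) + Belt (uB c)`. -/
private noncomputable def uA (c : L × L) : L := (2⁻¹ : ℝ) • (c.1 + J c.2)

/-- The `B`-coordinate of the decomposition. -/
private noncomputable def uB (c : L × L) : L := (2⁻¹ : ℝ) • (c.1 - J c.2)

private lemma cbr_add_right (a b c : L × L) : cbr a (b + c) = cbr a b + cbr a c := by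
  refine Prod.ext ?_ ?_ <;> simp [cbr] <;> abel

private lemma cbr_add_left (a b c : L × L) : cbr (a + b) c = cbr a c + cbr b c := by
  refine Prod.ext ?_ ?_ <;> simp [cbr] <;> abel

private lemma cbr_skew (a b : L × L) : cbr a b = -cbr b a := by
  refine Prod.ext ?_ ?_ <;> simp only [cbr, Prod.fst_neg, Prod.snd_neg]
  · rw [← lie_skew b.1 a.1, ← lie_skew b.2 a.2]
    abel
  · rw [← lie_skew b.1 a.2, ← lie_skew b.2 a.1]
    abel

private lemma cbr_neg_right (a b : L × L) : cbr a (-b) = -cbr a b := by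
  refine Prod.ext ?_ ?_ <;> simp only [cbr, Prod.fst_neg, Prod.snd_neg, lie_neg] <;> abel

private lemma cbr_zero_left (c : L × L) : cbr 0 c = 0 := by
  refine Prod.ext ?_ ?_ <;> simp [cbr]

private lemma cbr_leibniz (a b c : L × L) :
    cbr a (cbr b c) = cbr (cbr a b) c + cbr b (cbr a c) := by
  refine Prod.ext ?_ ?_ <;>
    simp only [cbr, lie_sub, sub_lie, lie_add, add_lie, lie_lie, Prod.fst_add, Prod.snd_add] <;>
    abel

private lemma R1 (hJ2 : ∀ x, J (J x) = -x) (hab : ∀ x y : L, ⁅J x, J y⁆ = ⁅x, y⁆)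
    (x y : L) : ⁅J x, y⁆ = -⁅x, J y⁆ := by
  have h := hab x (J y)
  rw [hJ2, lie_neg] at h
  exact neg_eq_iff_eq_neg.mp h

private lemma split (hJ2 : ∀ x, J (J x) = -x) (c : L × L) :
    Aelt J (uA J c) + Belt J (uB J c) = c := by
  refine Prod.ext ?_ ?_ <;>
    simp [Aelt, Belt, uA, uB, map_smul, map_add, map_sub, hJ2] <;> module

private lemma ha (hJ2 : ∀ x, J (J x) = -x) (hab : ∀ x y : L, ⁅J x, J y⁆ = ⁅x, y⁆)
    (u v : L) : cbr (Aelt J u) (Aelt J v) = 0 := by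
  refine Prod.ext ?_ ?_ <;> simp only [cbr, Aelt]
  · rw [neg_lie, lie_neg, neg_neg, hab]
    simp
  · rw [lie_neg, neg_lie, R1 J hJ2 hab u v, neg_neg]
    exact neg_add_cancel _

private lemma hb (hJ2 : ∀ x, J (J x) = -x) (hab : ∀ x y : L, ⁅J x, J y⁆ = ⁅x, y⁆)
    (u v : L) : cbr (Belt J u) (Belt J v) = 0 := by
  refine Prod.ext ?_ ?_ <;> simp only [cbr, Belt]
  · rw [hab]
    simp
  · rw [R1 J hJ2 hab u v]
    exact add_neg_cancel _

private lemma AAcomm (hJ2 : ∀ x, J (J x) = -x) (hab : ∀ x y : L, ⁅J x, J y⁆ = ⁅x, y⁆)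
    (u v : L) (c : L × L) :
    cbr (Aelt J u) (cbr (Aelt J v) c) = cbr (Aelt J v) (cbr (Aelt J u) c) := by
  rw [cbr_leibniz, ha J hJ2 hab, cbr_zero_left, zero_add]

private lemma BBcomm (hJ2 : ∀ x, J (J x) = -x) (hab : ∀ x y : L, ⁅J x, J y⁆ = ⁅x, y⁆)
    (u v : L) (c : L × L) :
    cbr (Belt J u) (cbr (Belt J v) c) = cbr (Belt J v) (cbr (Belt J u) c) := by
  rw [cbr_leibniz, hb J hJ2 hab, cbr_zero_left, zero_add]

/-- Bracketing an `A`-element with anything only sees the `B`-part of the other argument. -/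
private lemma killA (hJ2 : ∀ x, J (J x) = -x) (hab : ∀ x y : L, ⁅J x, J y⁆ = ⁅x, y⁆)
    (s : L) (c : L × L) :
    cbr (Aelt J s) c = cbr (Aelt J s) (Belt J (uB J c)) := by
  conv_lhs => rw [← split J hJ2 c]
  rw [cbr_add_right, ha J hJ2 hab, zero_add]

private lemma killB (hJ2 : ∀ x, J (J x) = -x) (hab : ∀ x y : L, ⁅J x, J y⁆ = ⁅x, y⁆)
    (s : L) (c : L × L) :
    cbr (Belt J s) c = cbr (Belt J s) (Aelt J (uA J c)) := by
  conv_lhs => rw [← split J hJ2 c]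
  rw [cbr_add_right, hb J hJ2 hab, add_zero]

private lemma J1 (hJ2 : ∀ x, J (J x) = -x) (hab : ∀ x y : L, ⁅J x, J y⁆ = ⁅x, y⁆)
    (s t : L) (c : L × L) :
    cbr (Aelt J s) (Belt J (uB J (cbr (Aelt J t) c))) =
      cbr (Aelt J t) (Belt J (uB J (cbr (Aelt J s) c))) := by
  rw [← killA J hJ2 hab, ← killA J hJ2 hab, AAcomm J hJ2 hab]

private lemma J1' (hJ2 : ∀ x, J (J x) = -x) (hab : ∀ x y : L, ⁅J x, J y⁆ = ⁅x, y⁆)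
    (s t : L) (c : L × L) :
    cbr (Belt J s) (Aelt J (uA J (cbr (Belt J t) c))) =
      cbr (Belt J t) (Aelt J (uA J (cbr (Belt J s) c))) := by
  rw [← killB J hJ2 hab, ← killB J hJ2 hab, BBcomm J hJ2 hab]

private lemma cbr_neg_left (a b : L × L) : cbr (-a) b = -cbr a b := by
  refine Prod.ext ?_ ?_ <;> simp only [cbr, Prod.fst_neg, Prod.snd_neg, neg_lie] <;> abel

private lemma uA_neg (c : L × L) : uA J (-c) = -uA J c := by
  simp only [uA, Prod.fst_neg, Prod.snd_neg, map_neg]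
  module

private lemma Aelt_neg (s : L) : Aelt J (-s) = -Aelt J s := by
  refine Prod.ext ?_ ?_ <;> simp [Aelt]

private lemma S1 (hJ2 : ∀ x, J (J x) = -x) (hab : ∀ x y : L, ⁅J x, J y⁆ = ⁅x, y⁆)
    (x y z w : L) :
    cbr (Aelt J (uA J (cbr (Aelt J x) (Belt J y)))) (Belt J (uB J (cbr (Aelt J z) (Belt J w)))) =
      cbr (Aelt J (uA J (cbr (Aelt J x) (Belt J w)))) (Belt J (uB J (cbr (Aelt J z) (Belt J y)))) := by
  have pas : ∀ y w : L, cbr (Aelt J (uA J (cbr (Aelt J x) (Belt J y)))) (Belt J w) =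
      cbr (Aelt J (uA J (cbr (Aelt J x) (Belt J w)))) (Belt J y) := by
    intro y w
    rw [cbr_skew (Aelt J (uA J (cbr (Aelt J x) (Belt J y)))) (Belt J w),
        cbr_skew (Aelt J x) (Belt J y), uA_neg, Aelt_neg, cbr_neg_right,
        cbr_skew (Aelt J x) (Belt J w), uA_neg, Aelt_neg, neg_neg, cbr_neg_left,
        J1' J hJ2 hab w y (Aelt J x)]
    exact cbr_skew _ _
  calc
    cbr (Aelt J (uA J (cbr (Aelt J x) (Belt J y)))) (Belt J (uB J (cbr (Aelt J z) (Belt J w))))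
        = cbr (Aelt J z)
            (Belt J (uB J (cbr (Aelt J (uA J (cbr (Aelt J x) (Belt J y)))) (Belt J w)))) :=
      J1 J hJ2 hab _ z (Belt J w)
    _ = cbr (Aelt J z)
            (Belt J (uB J (cbr (Aelt J (uA J (cbr (Aelt J x) (Belt J w)))) (Belt J y)))) := by
      rw [pas y w]
    _ = cbr (Aelt J (uA J (cbr (Aelt J x) (Belt J w))))
            (Belt J (uB J (cbr (Aelt J z) (Belt J y)))) := (J1 J hJ2 hab _ z (Belt J y)).symm

private lemma S2 (hJ2 : ∀ x, J (J x) = -x) (hab : ∀ x y : L, ⁅J x, J y⁆ = ⁅x, y⁆)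
    (x y z w : L) :
    cbr (Aelt J (uA J (cbr (Aelt J x) (Belt J y)))) (Belt J (uB J (cbr (Aelt J z) (Belt J w)))) =
      cbr (Aelt J (uA J (cbr (Aelt J z) (Belt J y)))) (Belt J (uB J (cbr (Aelt J x) (Belt J w)))) := by
  have pbs : cbr (Belt J (uB J (cbr (Aelt J z) (Belt J w)))) (Aelt J x) =
      cbr (Belt J (uB J (cbr (Aelt J x) (Belt J w)))) (Aelt J z) := by
    rw [cbr_skew (Belt J (uB J (cbr (Aelt J z) (Belt J w)))) (Aelt J x),
        cbr_skew (Belt J (uB J (cbr (Aelt J x) (Belt J w)))) (Aelt J z),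
        J1 J hJ2 hab x z (Belt J w)]
  calc
    cbr (Aelt J (uA J (cbr (Aelt J x) (Belt J y)))) (Belt J (uB J (cbr (Aelt J z) (Belt J w))))
        = cbr (Belt J (uB J (cbr (Aelt J z) (Belt J w))))
            (Aelt J (uA J (cbr (Belt J y) (Aelt J x)))) := by
      rw [cbr_skew (Aelt J (uA J (cbr (Aelt J x) (Belt J y))))
            (Belt J (uB J (cbr (Aelt J z) (Belt J w)))),
          cbr_skew (Aelt J x) (Belt J y), uA_neg, Aelt_neg, cbr_neg_right, neg_neg]
    _ = cbr (Belt J y)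
            (Aelt J (uA J (cbr (Belt J (uB J (cbr (Aelt J z) (Belt J w)))) (Aelt J x)))) :=
      J1' J hJ2 hab _ y (Aelt J x)
    _ = cbr (Belt J y)
            (Aelt J (uA J (cbr (Belt J (uB J (cbr (Aelt J x) (Belt J w)))) (Aelt J z)))) := by
      rw [pbs]
    _ = cbr (Belt J (uB J (cbr (Aelt J x) (Belt J w))))
            (Aelt J (uA J (cbr (Belt J y) (Aelt J z)))) := (J1' J hJ2 hab _ y (Aelt J z)).symm
    _ = cbr (Aelt J (uA J (cbr (Aelt J z) (Belt J y))))
            (Belt J (uB J (cbr (Aelt J x) (Belt J w)))) := by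
      rw [cbr_skew (Belt J y) (Aelt J z), uA_neg, Aelt_neg, cbr_neg_right, ← cbr_skew]

private lemma keyc (hJ2 : ∀ x, J (J x) = -x) (hab : ∀ x y : L, ⁅J x, J y⁆ = ⁅x, y⁆)
    (x y z w : L) :
    cbr (cbr (Aelt J x) (Belt J y)) (cbr (Aelt J z) (Belt J w)) = 0 := by
  have hT : cbr (Aelt J (uA J (cbr (Aelt J x) (Belt J y))))
        (Belt J (uB J (cbr (Aelt J z) (Belt J w)))) =
      cbr (Aelt J (uA J (cbr (Aelt J z) (Belt J w))))
        (Belt J (uB J (cbr (Aelt J x) (Belt J y)))) :=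
    (S1 J hJ2 hab x y z w).trans (S2 J hJ2 hab x w z y)
  conv_lhs => rw [← split J hJ2 (cbr (Aelt J x) (Belt J y)),
    ← split J hJ2 (cbr (Aelt J z) (Belt J w))]
  rw [cbr_add_left, cbr_add_right, cbr_add_right, ha J hJ2 hab, hb J hJ2 hab,
      cbr_skew (Belt J (uB J (cbr (Aelt J x) (Belt J y))))
        (Aelt J (uA J (cbr (Aelt J z) (Belt J w)))), hT]
  abel

private lemma hpair (a b : L) :
    cbr ((a, (0 : L)) : L × L) ((b, (0 : L)) : L × L) = (⁅a, b⁆, (0 : L)) := by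
  refine Prod.ext ?_ ?_ <;> simp [cbr]

private lemma hemb (hJ2 : ∀ x, J (J x) = -x) (a : L) :
    ((a, (0 : L)) : L × L) = Aelt J ((2⁻¹ : ℝ) • a) + Belt J ((2⁻¹ : ℝ) • a) := by
  refine Prod.ext ?_ ?_ <;> simp [Aelt, Belt] <;> module

private lemma hsplit2 (hJ2 : ∀ x, J (J x) = -x) (hab : ∀ x y : L, ⁅J x, J y⁆ = ⁅x, y⁆)
    (a b : L) :
    ((⁅a, b⁆, (0 : L)) : L × L) =
      cbr (Aelt J ((2⁻¹ : ℝ) • a)) (Belt J ((2⁻¹ : ℝ) • b)) +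
        -cbr (Aelt J ((2⁻¹ : ℝ) • b)) (Belt J ((2⁻¹ : ℝ) • a)) := by
  rw [← hpair a b, hemb J hJ2 a, hemb J hJ2 b, cbr_add_left, cbr_add_right, cbr_add_right,
      ha J hJ2 hab, hb J hJ2 hab,
      cbr_skew (Belt J ((2⁻¹ : ℝ) • a)) (Aelt J ((2⁻¹ : ℝ) • b))]
  abel

private lemma habcd (hJ2 : ∀ x, J (J x) = -x) (hab : ∀ x y : L, ⁅J x, J y⁆ = ⁅x, y⁆)
    (a b c d : L) : ⁅(⁅a, b⁆ : L), (⁅c, d⁆ : L)⁆ = 0 := by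
  have h0 : cbr ((⁅a, b⁆, (0 : L)) : L × L) ((⁅c, d⁆, (0 : L)) : L × L) = 0 := by
    rw [hsplit2 J hJ2 hab a b, hsplit2 J hJ2 hab c d, cbr_add_left, cbr_add_right,
        cbr_add_right]
    simp only [cbr_neg_left, cbr_neg_right, keyc J hJ2 hab, neg_zero, add_zero, zero_add,
      neg_neg]
  rw [hpair] at h0
  simpa using congrArg Prod.fst h0

end AuxACS

/-- If `J` is an abelian complex structure on a real Lie algebra `𝔤`, then the
commutator ideal `𝔤' = [𝔤,𝔤]` (the span of all brackets) is an abelian subalgebra. -/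
theorem commutator_ideal_abelian {L : Type*} [LieRing L] [LieAlgebra ℝ L]
    (J : L →ₗ[ℝ] L) (hJ2 : ∀ x, J (J x) = -x)
    (hab : ∀ x y : L, ⁅J x, J y⁆ = ⁅x, y⁆)
    (x : L) (hx : x ∈ Submodule.span ℝ {z : L | ∃ a b : L, z = ⁅a, b⁆})
    (y : L) (hy : y ∈ Submodule.span ℝ {z : L | ∃ a b : L, z = ⁅a, b⁆}) :
    ⁅x, y⁆ = 0 := by
  have h1 : ∀ v, v ∈ Submodule.span ℝ {z : L | ∃ a b : L, z = ⁅a, b⁆} →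
      ∀ a b : L, ⁅(⁅a, b⁆ : L), v⁆ = 0 := by
    intro v hv
    induction hv using Submodule.span_induction with
    | mem t ht => obtain ⟨c, d, rfl⟩ := ht; exact fun a b => habcd J hJ2 hab a b c d
    | zero => intro a b; simp
    | add u v _ _ hu hv => intro a b; rw [lie_add, hu a b, hv a b, add_zero]
    | smul r u _ hu => intro a b; rw [lie_smul, hu a b, smul_zero]
  induction hx using Submodule.span_induction with
  | mem t ht => obtain ⟨a, b, rfl⟩ := ht; exact h1 y hy a b
  | zero => simp
  | add u v _ _ hu hv => rw [add_lie, hu, hv, add_zero]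
  | smul r u _ hu => rw [smul_lie, hu, smul_zero]
end

section
/- Let $\mathfrak{g}$ be a real Lie algebra with an abelian complex structure $J$. Then $J\mathfrak{g}'$, the image of the commutator ideal under $J$, is an abelian subalgebra of $\mathfrak{g}$. -/
set_option maxHeartbeats 1000000

open scoped TensorProduct

section Aux

variable {L : Type*} [LieRing L] [LieAlgebra ℝ L]

/-- Retraction of `x ↦ 1 ⊗ x : L → ℂ ⊗[ℝ] L` given by the real part. -/
noncomputable def reRetract : ℂ ⊗[ℝ] L →ₗ[ℝ] L :=
  TensorProduct.lift (LinearMap.mk₂ ℝ (fun (r : ℂ) (x : L) => r.re • x)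
    (fun r s x => by simp [add_smul])
    (fun a r x => by simp [smul_smul, mul_comm])
    (fun r x y => by simp [smul_add])
    (fun a r x => by rw [smul_comm]))

lemma reRetract_tmul (r : ℂ) (x : L) : reRetract (r ⊗ₜ[ℝ] x) = r.re • x := rfl

lemma one_tmul_injective {x : L} (h : (1 : ℂ) ⊗ₜ[ℝ] x = 0) : x = 0 := by
  have h2 := congrArg reRetract h
  rw [reRetract_tmul, map_zero] at h2
  simpa using h2

section Jc

variable (J : L →ₗ[ℝ] L)

local notation "C" => ℂ ⊗[ℝ] L

noncomputable def Jc : C →ₗ[ℂ] C := J.baseChange ℂ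

lemma habC (hab : ∀ x y : L, ⁅J x, J y⁆ = ⁅x, y⁆) : ∀ z w : C, ⁅Jc J z, Jc J w⁆ = ⁅z, w⁆ := by
  intro z w
  induction z using TensorProduct.induction_on with
  | zero => rw [map_zero, zero_lie (Jc J w), zero_lie w]
  | tmul r x =>
    induction w using TensorProduct.induction_on with
    | zero => rw [map_zero, lie_zero (Jc J (r ⊗ₜ[ℝ] x)), lie_zero (r ⊗ₜ[ℝ] x)]
    | tmul s y =>
      show ⁅Jc J (r ⊗ₜ[ℝ] x), Jc J (s ⊗ₜ[ℝ] y)⁆ = ⁅r ⊗ₜ[ℝ] x, s ⊗ₜ[ℝ] y⁆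
      rw [show Jc J (r ⊗ₜ[ℝ] x) = r ⊗ₜ[ℝ] (J x) from rfl,
        show Jc J (s ⊗ₜ[ℝ] y) = s ⊗ₜ[ℝ] (J y) from rfl,
        LieAlgebra.ExtendScalars.bracket_tmul, LieAlgebra.ExtendScalars.bracket_tmul, hab x y]
    | add w1 w2 h1 h2 =>
      rw [map_add, lie_add (Jc J (r ⊗ₜ[ℝ] x)) (Jc J w1) (Jc J w2),
        lie_add (r ⊗ₜ[ℝ] x) w1 w2, h1, h2]
  | add z1 z2 h1 h2 =>
    rw [map_add, add_lie (Jc J z1) (Jc J z2) (Jc J w), add_lie z1 z2 w, h1, h2]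

lemma hJ2C (hJ2 : ∀ x, J (J x) = -x) : ∀ z : C, Jc J (Jc J z) = -z := by
  intro z
  induction z using TensorProduct.induction_on with
  | zero => simp
  | tmul r x => simp [Jc, hJ2, TensorProduct.tmul_neg]
  | add z1 z2 h1 h2 => simp only [map_add, h1, h2, neg_add]

/-- Two `+I` eigenvectors bracket to zero. -/
lemma ppLem (hab : ∀ x y : L, ⁅J x, J y⁆ = ⁅x, y⁆) {z w : C}
    (hz : Jc J z = Complex.I • z) (hw : Jc J w = Complex.I • w) :
    ⁅z, w⁆ = 0 := by
  have h := habC J hab z w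
  rw [hz, hw, smul_lie Complex.I z, lie_smul Complex.I z w, smul_smul, Complex.I_mul_I,
    neg_one_smul] at h
  have h2 : (2 : ℂ) • ⁅z, w⁆ = 0 := by
    rw [two_smul]; nth_rewrite 1 [← h]; exact neg_add_cancel _
  exact (smul_eq_zero.mp h2).resolve_left (by norm_num)

/-- Two `-I` eigenvectors bracket to zero. -/
lemma qqLem (hab : ∀ x y : L, ⁅J x, J y⁆ = ⁅x, y⁆) {z w : C}
    (hz : Jc J z = -(Complex.I • z)) (hw : Jc J w = -(Complex.I • w)) :
    ⁅z, w⁆ = 0 := by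
  have h := habC J hab z w
  rw [hz, hw, neg_lie (Complex.I • z) (-(Complex.I • w)),
    lie_neg (Complex.I • z) (Complex.I • w), neg_neg, smul_lie Complex.I z,
    lie_smul Complex.I z w, smul_smul, Complex.I_mul_I, neg_one_smul] at h
  have h2 : (2 : ℂ) • ⁅z, w⁆ = 0 := by
    rw [two_smul]; nth_rewrite 1 [← h]; exact neg_add_cancel _
  exact (smul_eq_zero.mp h2).resolve_left (by norm_num)

/-- Projection onto the `+I` eigenspace. -/
noncomputable def Pp (z : C) : C := (2⁻¹ : ℂ) • (z - Complex.I • Jc J z)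

/-- Projection onto the `-I` eigenspace. -/
noncomputable def Pm (z : C) : C := (2⁻¹ : ℂ) • (z + Complex.I • Jc J z)

lemma splitPM (z : C) : Pp J z + Pm J z = z := by
  unfold Pp Pm
  module

lemma eigP (hJ2 : ∀ x, J (J x) = -x) (z : C) : Jc J (Pp J z) = Complex.I • Pp J z := by
  unfold Pp
  rw [map_smul, map_sub, map_smul, hJ2C J hJ2]
  match_scalars <;> simp [Complex.ext_iff]

lemma eigM (hJ2 : ∀ x, J (J x) = -x) (z : C) : Jc J (Pm J z) = -(Complex.I • Pm J z) := by
  unfold Pm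
  rw [map_smul, map_add, map_smul, hJ2C J hJ2]
  match_scalars <;> simp [Complex.ext_iff]

lemma Pp_neg (z : C) : Pp J (-z) = -Pp J z := by
  unfold Pp; rw [map_neg]; module

lemma H1 (hJ2 : ∀ x, J (J x) = -x) (hab : ∀ x y : L, ⁅J x, J y⁆ = ⁅x, y⁆)
    (c b w : C) (hc : Jc J c = Complex.I • c) (hb : Jc J b = -(Complex.I • b)) :
    ⁅c, ⁅b, w⁆⁆ = ⁅Pm J ⁅c, b⁆, Pp J w⁆ := by
  calc ⁅c, ⁅b, w⁆⁆ = ⁅c, ⁅b, Pp J w + Pm J w⁆⁆ := by rw [splitPM J w]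
    _ = ⁅c, ⁅b, Pp J w⁆ + ⁅b, Pm J w⁆⁆ := by rw [lie_add b (Pp J w) (Pm J w)]
    _ = ⁅c, ⁅b, Pp J w⁆⁆ + ⁅c, ⁅b, Pm J w⁆⁆ := by rw [lie_add c ⁅b, Pp J w⁆ ⁅b, Pm J w⁆]
    _ = ⁅c, ⁅b, Pp J w⁆⁆ := by rw [qqLem J hab hb (eigM J hJ2 w), lie_zero c, add_zero]
    _ = ⁅⁅c, b⁆, Pp J w⁆ + ⁅b, ⁅c, Pp J w⁆⁆ := leibniz_lie c b (Pp J w)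
    _ = ⁅⁅c, b⁆, Pp J w⁆ := by rw [ppLem J hab hc (eigP J hJ2 w), lie_zero b, add_zero]
    _ = ⁅Pp J ⁅c, b⁆ + Pm J ⁅c, b⁆, Pp J w⁆ := by rw [splitPM J ⁅c, b⁆]
    _ = ⁅Pp J ⁅c, b⁆, Pp J w⁆ + ⁅Pm J ⁅c, b⁆, Pp J w⁆ := by
        rw [add_lie (Pp J ⁅c, b⁆) (Pm J ⁅c, b⁆) (Pp J w)]
    _ = ⁅Pm J ⁅c, b⁆, Pp J w⁆ := by
        rw [ppLem J hab (eigP J hJ2 ⁅c, b⁆) (eigP J hJ2 w), zero_add]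

lemma H2 (hJ2 : ∀ x, J (J x) = -x) (hab : ∀ x y : L, ⁅J x, J y⁆ = ⁅x, y⁆)
    (b c w : C) (hb : Jc J b = -(Complex.I • b)) (hc : Jc J c = Complex.I • c) :
    ⁅b, ⁅c, w⁆⁆ = ⁅Pp J ⁅b, c⁆, Pm J w⁆ := by
  calc ⁅b, ⁅c, w⁆⁆ = ⁅b, ⁅c, Pp J w + Pm J w⁆⁆ := by rw [splitPM J w]
    _ = ⁅b, ⁅c, Pp J w⁆ + ⁅c, Pm J w⁆⁆ := by rw [lie_add c (Pp J w) (Pm J w)]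
    _ = ⁅b, ⁅c, Pp J w⁆⁆ + ⁅b, ⁅c, Pm J w⁆⁆ := by rw [lie_add b ⁅c, Pp J w⁆ ⁅c, Pm J w⁆]
    _ = ⁅b, ⁅c, Pm J w⁆⁆ := by rw [ppLem J hab hc (eigP J hJ2 w), lie_zero b, zero_add]
    _ = ⁅⁅b, c⁆, Pm J w⁆ + ⁅c, ⁅b, Pm J w⁆⁆ := leibniz_lie b c (Pm J w)
    _ = ⁅⁅b, c⁆, Pm J w⁆ := by rw [qqLem J hab hb (eigM J hJ2 w), lie_zero c, add_zero]
    _ = ⁅Pp J ⁅b, c⁆ + Pm J ⁅b, c⁆, Pm J w⁆ := by rw [splitPM J ⁅b, c⁆]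
    _ = ⁅Pp J ⁅b, c⁆, Pm J w⁆ + ⁅Pm J ⁅b, c⁆, Pm J w⁆ := by
        rw [add_lie (Pp J ⁅b, c⁆) (Pm J ⁅b, c⁆) (Pm J w)]
    _ = ⁅Pp J ⁅b, c⁆, Pm J w⁆ := by
        rw [qqLem J hab (eigM J hJ2 ⁅b, c⁆) (eigM J hJ2 w), add_zero]

/-- The `b ↔ d` symmetry of `F a b c d = ⁅Pp ⁅a,b⁆, Pm ⁅c,d⁆⁆`. -/
lemma sym1 (hJ2 : ∀ x, J (J x) = -x) (hab : ∀ x y : L, ⁅J x, J y⁆ = ⁅x, y⁆)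
    (a b c d : C) (ha : Jc J a = Complex.I • a) (hb : Jc J b = -(Complex.I • b))
    (hc : Jc J c = Complex.I • c) (hd : Jc J d = -(Complex.I • d)) :
    ⁅Pp J ⁅a, b⁆, Pm J ⁅c, d⁆⁆ = ⁅Pp J ⁅a, d⁆, Pm J ⁅c, b⁆⁆ := by
  have e1 : ⁅Pp J ⁅a, b⁆, Pm J ⁅c, d⁆⁆ = -⁅c, ⁅d, ⁅a, b⁆⁆⁆ := by
    rw [H1 J hJ2 hab c d ⁅a, b⁆ hc hd, lie_skew (Pp J ⁅a, b⁆) (Pm J ⁅c, d⁆)]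
  have e2 : ⁅d, ⁅a, b⁆⁆ = ⁅b, ⁅a, d⁆⁆ := by
    calc ⁅d, ⁅a, b⁆⁆ = ⁅⁅d, a⁆, b⁆ + ⁅a, ⁅d, b⁆⁆ := leibniz_lie d a b
      _ = ⁅⁅d, a⁆, b⁆ := by rw [qqLem J hab hd hb, lie_zero a, add_zero]
      _ = -⁅b, ⁅d, a⁆⁆ := (lie_skew ⁅d, a⁆ b).symm
      _ = ⁅b, ⁅a, d⁆⁆ := by rw [← lie_skew a d, lie_neg b ⁅d, a⁆]
  rw [e1, e2, H1 J hJ2 hab c b ⁅a, d⁆ hc hb, lie_skew (Pp J ⁅a, d⁆) (Pm J ⁅c, b⁆)]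

/-- The `a ↔ c` symmetry of `F a b c d = ⁅Pp ⁅a,b⁆, Pm ⁅c,d⁆⁆`. -/
lemma sym2 (hJ2 : ∀ x, J (J x) = -x) (hab : ∀ x y : L, ⁅J x, J y⁆ = ⁅x, y⁆)
    (a b c d : C) (ha : Jc J a = Complex.I • a) (hb : Jc J b = -(Complex.I • b))
    (hc : Jc J c = Complex.I • c) (hd : Jc J d = -(Complex.I • d)) :
    ⁅Pp J ⁅a, b⁆, Pm J ⁅c, d⁆⁆ = ⁅Pp J ⁅c, b⁆, Pm J ⁅a, d⁆⁆ := by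
  have e1 : ⁅Pp J ⁅a, b⁆, Pm J ⁅c, d⁆⁆ = -⁅b, ⁅a, ⁅c, d⁆⁆⁆ := by
    rw [← lie_skew a b, Pp_neg J ⁅b, a⁆, neg_lie (Pp J ⁅b, a⁆) (Pm J ⁅c, d⁆),
      H2 J hJ2 hab b a ⁅c, d⁆ hb ha]
  have e2 : ⁅a, ⁅c, d⁆⁆ = ⁅c, ⁅a, d⁆⁆ := by
    calc ⁅a, ⁅c, d⁆⁆ = ⁅⁅a, c⁆, d⁆ + ⁅c, ⁅a, d⁆⁆ := leibniz_lie a c d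
      _ = ⁅c, ⁅a, d⁆⁆ := by rw [ppLem J hab ha hc, zero_lie d, zero_add]
  rw [e1, e2, H2 J hJ2 hab b c ⁅a, d⁆ hb hc, ← lie_skew c b, Pp_neg J ⁅b, c⁆,
    neg_lie (Pp J ⁅b, c⁆) (Pm J ⁅a, d⁆)]

/-- The main lemma: brackets of eigenvectors commute. -/
lemma mainPM (hJ2 : ∀ x, J (J x) = -x) (hab : ∀ x y : L, ⁅J x, J y⁆ = ⁅x, y⁆)
    (a b c d : C) (ha : Jc J a = Complex.I • a) (hb : Jc J b = -(Complex.I • b))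
    (hc : Jc J c = Complex.I • c) (hd : Jc J d = -(Complex.I • d)) :
    ⁅⁅a, b⁆, ⁅c, d⁆⁆ = 0 := by
  have expand : ⁅⁅a, b⁆, ⁅c, d⁆⁆ =
      ⁅Pp J ⁅a, b⁆, Pm J ⁅c, d⁆⁆ + ⁅Pm J ⁅a, b⁆, Pp J ⁅c, d⁆⁆ := by
    calc ⁅⁅a, b⁆, ⁅c, d⁆⁆
        = ⁅Pp J ⁅a, b⁆ + Pm J ⁅a, b⁆, Pp J ⁅c, d⁆ + Pm J ⁅c, d⁆⁆ := by
          rw [splitPM J ⁅a, b⁆, splitPM J ⁅c, d⁆]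
      _ = ⁅Pp J ⁅a, b⁆, Pp J ⁅c, d⁆ + Pm J ⁅c, d⁆⁆
            + ⁅Pm J ⁅a, b⁆, Pp J ⁅c, d⁆ + Pm J ⁅c, d⁆⁆ := by
          rw [add_lie (Pp J ⁅a, b⁆) (Pm J ⁅a, b⁆) (Pp J ⁅c, d⁆ + Pm J ⁅c, d⁆)]
      _ = ⁅Pp J ⁅a, b⁆, Pp J ⁅c, d⁆⁆ + ⁅Pp J ⁅a, b⁆, Pm J ⁅c, d⁆⁆
            + (⁅Pm J ⁅a, b⁆, Pp J ⁅c, d⁆⁆ + ⁅Pm J ⁅a, b⁆, Pm J ⁅c, d⁆⁆) := by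
          rw [lie_add (Pp J ⁅a, b⁆) (Pp J ⁅c, d⁆) (Pm J ⁅c, d⁆),
            lie_add (Pm J ⁅a, b⁆) (Pp J ⁅c, d⁆) (Pm J ⁅c, d⁆)]
      _ = _ := by
          rw [ppLem J hab (eigP J hJ2 ⁅a, b⁆) (eigP J hJ2 ⁅c, d⁆),
            qqLem J hab (eigM J hJ2 ⁅a, b⁆) (eigM J hJ2 ⁅c, d⁆), zero_add, add_zero]
  have h2 : ⁅Pm J ⁅a, b⁆, Pp J ⁅c, d⁆⁆ = -⁅Pp J ⁅c, d⁆, Pm J ⁅a, b⁆⁆ :=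
    (lie_skew (Pm J ⁅a, b⁆) (Pp J ⁅c, d⁆)).symm
  have h3 : ⁅Pp J ⁅c, d⁆, Pm J ⁅a, b⁆⁆ = ⁅Pp J ⁅c, b⁆, Pm J ⁅a, d⁆⁆ :=
    sym1 J hJ2 hab c d a b hc hd ha hb
  have h4 : ⁅Pp J ⁅a, b⁆, Pm J ⁅c, d⁆⁆ = ⁅Pp J ⁅c, b⁆, Pm J ⁅a, d⁆⁆ :=
    sym2 J hJ2 hab a b c d ha hb hc hd
  rw [expand, h2, h3, h4, add_neg_cancel ⁅Pp J ⁅c, b⁆, Pm J ⁅a, d⁆⁆]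

/-- Brackets of arbitrary eigenvectors commute. -/
lemma main4 (hJ2 : ∀ x, J (J x) = -x) (hab : ∀ x y : L, ⁅J x, J y⁆ = ⁅x, y⁆)
    (z1 z2 z3 z4 : C)
    (h1 : Jc J z1 = Complex.I • z1 ∨ Jc J z1 = -(Complex.I • z1))
    (h2 : Jc J z2 = Complex.I • z2 ∨ Jc J z2 = -(Complex.I • z2))
    (h3 : Jc J z3 = Complex.I • z3 ∨ Jc J z3 = -(Complex.I • z3))
    (h4 : Jc J z4 = Complex.I • z4 ∨ Jc J z4 = -(Complex.I • z4)) :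
    ⁅⁅z1, z2⁆, ⁅z3, z4⁆⁆ = 0 := by
  rcases h1 with p1 | m1 <;> rcases h2 with p2 | m2
  · rw [ppLem J hab p1 p2, zero_lie ⁅z3, z4⁆]
  · rcases h3 with p3 | m3 <;> rcases h4 with p4 | m4
    · rw [ppLem J hab p3 p4, lie_zero ⁅z1, z2⁆]
    · exact mainPM J hJ2 hab z1 z2 z3 z4 p1 m2 p3 m4
    · rw [← lie_skew z3 z4, lie_neg ⁅z1, z2⁆ ⁅z4, z3⁆,
        mainPM J hJ2 hab z1 z2 z4 z3 p1 m2 p4 m3, neg_zero]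
    · rw [qqLem J hab m3 m4, lie_zero ⁅z1, z2⁆]
  · rcases h3 with p3 | m3 <;> rcases h4 with p4 | m4
    · rw [ppLem J hab p3 p4, lie_zero ⁅z1, z2⁆]
    · rw [← lie_skew z1 z2, neg_lie ⁅z2, z1⁆ ⁅z3, z4⁆,
        mainPM J hJ2 hab z2 z1 z3 z4 p2 m1 p3 m4, neg_zero]
    · rw [← lie_skew z1 z2, ← lie_skew z3 z4, neg_lie ⁅z2, z1⁆ (-⁅z4, z3⁆),
        lie_neg ⁅z2, z1⁆ ⁅z4, z3⁆, mainPM J hJ2 hab z2 z1 z4 z3 p2 m1 p4 m3,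
        neg_zero, neg_zero]
    · rw [qqLem J hab m3 m4, lie_zero ⁅z1, z2⁆]
  · rw [qqLem J hab m1 m2, zero_lie ⁅z3, z4⁆]

/-- The complexification (hence `L`) is metabelian. -/
lemma metabelian (hJ2 : ∀ x, J (J x) = -x) (hab : ∀ x y : L, ⁅J x, J y⁆ = ⁅x, y⁆)
    (a b c d : L) : ⁅⁅a, b⁆, ⁅c, d⁆⁆ = (0 : L) := by
  have G3 : ∀ z1 z2 z3 z4 : C,
      (Jc J z1 = Complex.I • z1 ∨ Jc J z1 = -(Complex.I • z1)) →
      (Jc J z2 = Complex.I • z2 ∨ Jc J z2 = -(Complex.I • z2)) →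
      (Jc J z3 = Complex.I • z3 ∨ Jc J z3 = -(Complex.I • z3)) →
      ⁅⁅z1, z2⁆, ⁅z3, z4⁆⁆ = 0 := by
    intro z1 z2 z3 z4 h1 h2 h3
    rw [show z4 = Pp J z4 + Pm J z4 from (splitPM J z4).symm,
      lie_add z3 (Pp J z4) (Pm J z4), lie_add ⁅z1, z2⁆ ⁅z3, Pp J z4⁆ ⁅z3, Pm J z4⁆,
      main4 J hJ2 hab z1 z2 z3 (Pp J z4) h1 h2 h3 (Or.inl (eigP J hJ2 z4)),
      main4 J hJ2 hab z1 z2 z3 (Pm J z4) h1 h2 h3 (Or.inr (eigM J hJ2 z4)), add_zero]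
  have G2 : ∀ z1 z2 z3 z4 : C,
      (Jc J z1 = Complex.I • z1 ∨ Jc J z1 = -(Complex.I • z1)) →
      (Jc J z2 = Complex.I • z2 ∨ Jc J z2 = -(Complex.I • z2)) →
      ⁅⁅z1, z2⁆, ⁅z3, z4⁆⁆ = 0 := by
    intro z1 z2 z3 z4 h1 h2
    rw [show z3 = Pp J z3 + Pm J z3 from (splitPM J z3).symm,
      add_lie (Pp J z3) (Pm J z3) z4, lie_add ⁅z1, z2⁆ ⁅Pp J z3, z4⁆ ⁅Pm J z3, z4⁆,
      G3 z1 z2 (Pp J z3) z4 h1 h2 (Or.inl (eigP J hJ2 z3)),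
      G3 z1 z2 (Pm J z3) z4 h1 h2 (Or.inr (eigM J hJ2 z3)), add_zero]
  have G1 : ∀ z1 z2 z3 z4 : C,
      (Jc J z1 = Complex.I • z1 ∨ Jc J z1 = -(Complex.I • z1)) →
      ⁅⁅z1, z2⁆, ⁅z3, z4⁆⁆ = 0 := by
    intro z1 z2 z3 z4 h1
    rw [show z2 = Pp J z2 + Pm J z2 from (splitPM J z2).symm,
      lie_add z1 (Pp J z2) (Pm J z2), add_lie ⁅z1, Pp J z2⁆ ⁅z1, Pm J z2⁆ ⁅z3, z4⁆,
      G2 z1 (Pp J z2) z3 z4 h1 (Or.inl (eigP J hJ2 z2)),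
      G2 z1 (Pm J z2) z3 z4 h1 (Or.inr (eigM J hJ2 z2)), add_zero]
  have key : ∀ z1 z2 z3 z4 : C, ⁅⁅z1, z2⁆, ⁅z3, z4⁆⁆ = 0 := by
    intro z1 z2 z3 z4
    rw [show z1 = Pp J z1 + Pm J z1 from (splitPM J z1).symm,
      add_lie (Pp J z1) (Pm J z1) z2, add_lie ⁅Pp J z1, z2⁆ ⁅Pm J z1, z2⁆ ⁅z3, z4⁆,
      G1 (Pp J z1) z2 z3 z4 (Or.inl (eigP J hJ2 z1)),
      G1 (Pm J z1) z2 z3 z4 (Or.inr (eigM J hJ2 z1)), add_zero]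
  have br : ∀ v w : L, ⁅(1 : ℂ) ⊗ₜ[ℝ] v, (1 : ℂ) ⊗ₜ[ℝ] w⁆ = (1 : ℂ) ⊗ₜ[ℝ] ⁅v, w⁆ := by
    intro v w
    have h := LieAlgebra.ExtendScalars.bracket_tmul ℝ ℂ L L (1 : ℂ) (1 : ℂ) v w
    rw [one_mul] at h
    exact h
  have h0 : (1 : ℂ) ⊗ₜ[ℝ] ⁅⁅a, b⁆, ⁅c, d⁆⁆ = 0 := by
    rw [← br ⁅a, b⁆ ⁅c, d⁆, ← br a b, ← br c d]
    exact key _ _ _ _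
  exact one_tmul_injective h0

end Jc

end Aux

/-- If `J` is an abelian complex structure on a real Lie algebra `𝔤`, then `J𝔤'`,
the image under `J` of the commutator ideal, is an abelian subalgebra. -/
theorem J_commutator_abelian {L : Type*} [LieRing L] [LieAlgebra ℝ L]
    (J : L →ₗ[ℝ] L) (hJ2 : ∀ x, J (J x) = -x)
    (hab : ∀ x y : L, ⁅J x, J y⁆ = ⁅x, y⁆)
    (x : L)
    (hx : x ∈ (Submodule.span ℝ {z : L | ∃ a b : L, z = ⁅a, b⁆}).map J)
    (y : L)
    (hy : y ∈ (Submodule.span ℝ {z : L | ∃ a b : L, z = ⁅a, b⁆}).map J) :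
    ⁅x, y⁆ = 0 := by
  obtain ⟨u, hu, rfl⟩ := hx
  obtain ⟨v, hv, rfl⟩ := hy
  rw [hab u v]
  have key := metabelian J hJ2 hab
  have h1 : ∀ w ∈ Submodule.span ℝ {z : L | ∃ a b : L, z = ⁅a, b⁆},
      ∀ a b : L, ⁅⁅a, b⁆, w⁆ = 0 := by
    intro w hw
    induction hw using Submodule.span_induction with
    | mem z hz => obtain ⟨c, d, rfl⟩ := hz; intro a b; exact key a b c d
    | zero => intro a b; exact lie_zero ⁅a, b⁆
    | add z1 z2 _ _ p1 p2 =>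
      intro a b; rw [lie_add ⁅a, b⁆ z1 z2, p1 a b, p2 a b, add_zero]
    | smul r z _ p => intro a b; rw [lie_smul r ⁅a, b⁆ z, p a b, smul_zero]
  induction hu using Submodule.span_induction with
  | mem z hz => obtain ⟨a, b, rfl⟩ := hz; exact h1 v hv a b
  | zero => exact zero_lie v
  | add z1 z2 _ _ p1 p2 => rw [add_lie z1 z2 v, p1, p2, add_zero]
  | smul r z _ p => rw [smul_lie r z v, p, smul_zero]
end

section
/- Let $(\mathfrak{g},J,g)$ be a $2n$-dimensional Lie algebra with Hermitian structure, and let $\{e_1,\ldots,e_{2n}\}$ be an orthonormal basis. For any $X\in\mathfrak{g}$, the codifferential of the fundamental form $F(\cdot,\cdot)=g(\cdot,J\cdot)$ satisfies $d^*F(X)=\operatorname{tr}(\operatorname{ad}_{JX})-\tfrac12\, g\big(\sum_{i=1}^{2n}[Je_i,e_i],\,X\big)$. -/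
/-!
Both terms of `d*F(X)` are computed with the Koszul formula. Since `[eᵢ, eᵢ] = 0`, it gives
`g(∇_{eᵢ} eᵢ, Z) = g([Z, eᵢ], eᵢ)`, so `∑ᵢ F(∇_{eᵢ} eᵢ, X)` is the trace of `ad_{JX}`. In the
other term, `∑ᵢ F(eᵢ, ∇_{eᵢ} X)`, the contributions `g([eᵢ, X], Jeᵢ)` and `g([X, Jeᵢ], eᵢ)` are the
traces of `J ∘ ad_X` and `ad_X ∘ J`, which agree, and only `-½ g(∑ᵢ [Jeᵢ, eᵢ], X)` survives.
-/

open LinearMap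

section OrthonormalBasis

variable {R M ι : Type*} [CommRing R] [AddCommGroup M] [Module R M] [Fintype ι] [DecidableEq ι]
  {g : M →ₗ[R] M →ₗ[R] R} {e : Module.Basis ι R M}

theorem Module.Basis.repr_eq_of_orthonormal
    (he : ∀ i j, g (e i) (e j) = if i = j then 1 else 0) (v : M) (i : ι) :
    e.repr v i = g v (e i) := by
  conv_rhs => rw [← e.sum_repr v]
  simp only [map_sum, map_smul, LinearMap.sum_apply, LinearMap.smul_apply, he, smul_eq_mul,
    mul_ite, mul_one, mul_zero, Finset.sum_ite_eq', Finset.mem_univ, if_true]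

theorem LinearMap.trace_eq_sum_of_orthonormal
    (he : ∀ i j, g (e i) (e j) = if i = j then 1 else 0) (A : M →ₗ[R] M) :
    trace R M A = ∑ i, g (A (e i)) (e i) := by
  rw [trace_eq_matrix_trace R e A, Matrix.trace]
  simp [Matrix.diag, toMatrix_apply, e.repr_eq_of_orthonormal he]

theorem sum_apply_comp_comm_of_orthonormal
    (he : ∀ i j, g (e i) (e j) = if i = j then 1 else 0) (A B : M →ₗ[R] M) :
    ∑ i, g (A (B (e i))) (e i) = ∑ i, g (B (A (e i))) (e i) := by
  have : Module.Free R M := .of_basis e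
  have : Module.Finite R M := .of_basis e
  calc ∑ i, g (A (B (e i))) (e i)
        = trace R M (A * B) := (trace_eq_sum_of_orthonormal he (A * B)).symm
    _ = trace R M (B * A) := trace_mul_comm R A B
    _ = ∑ i, g (B (A (e i))) (e i) := trace_eq_sum_of_orthonormal he (B * A)

end OrthonormalBasis

theorem apply_right_eq_neg_apply_left_of_isometry {R M : Type*} [CommRing R] [AddCommGroup M]
    [Module R M] {g : M →ₗ[R] M →ₗ[R] R} {J : M →ₗ[R] M} (hJ2 : ∀ x, J (J x) = -x)
    (hcomp : ∀ x y, g (J x) (J y) = g x y) (u v : M) :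
    g u (J v) = -g (J u) v := by
  rw [← hcomp u (J v), hJ2, map_neg]

section Koszul

variable {L ι : Type*} [LieRing L] [LieAlgebra ℝ L] [Fintype ι] [DecidableEq ι]
  {g : L →ₗ[ℝ] L →ₗ[ℝ] ℝ} {nab : L → L → L}
  (hKoszul : ∀ X Y Z : L, 2 * g (nab X Y) Z = g ⁅X, Y⁆ Z - g ⁅Y, Z⁆ X + g ⁅Z, X⁆ Y)
include hKoszul

theorem koszul_nab_self_apply (Y Z : L) : g (nab Y Y) Z = g ⁅Z, Y⁆ Y := by
  have h := hKoszul Y Y Z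
  rw [lie_self, map_zero, LinearMap.zero_apply, ← lie_skew Y Z, map_neg, LinearMap.neg_apply] at h
  linarith

theorem sum_koszul_nab_basis_self {e : Module.Basis ι ℝ L}
    (he : ∀ i j, g (e i) (e j) = if i = j then 1 else 0) (Z : L) :
    ∑ i, g (nab (e i) (e i)) Z = trace ℝ L (LieAlgebra.ad ℝ L Z) := by
  simp only [koszul_nab_self_apply hKoszul, trace_eq_sum_of_orthonormal he, LieAlgebra.ad_apply]

theorem sum_koszul_apply_J_nab_basis (hsymm : ∀ x y, g x y = g y x) {J : L →ₗ[ℝ] L}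
    (hJ2 : ∀ x, J (J x) = -x) (hcomp : ∀ x y, g (J x) (J y) = g x y)
    {e : Module.Basis ι ℝ L} (he : ∀ i j, g (e i) (e j) = if i = j then 1 else 0) (X : L) :
    ∑ i, g (e i) (J (nab (e i) X)) = -(1 / 2) * g (∑ i, ⁅J (e i), e i⁆) X := by
  have hskew := apply_right_eq_neg_apply_left_of_isometry hJ2 hcomp
  have hterm : ∀ i, g (e i) (J (nab (e i) X)) =
      -(1 / 2) * (g ⁅e i, X⁆ (J (e i)) - g ⁅X, J (e i)⁆ (e i) + g ⁅J (e i), e i⁆ X) := by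
    intro i
    have h := hKoszul (e i) X (J (e i))
    rw [hskew, hsymm (J (e i))]
    linarith
  have hcancel : ∑ i, g ⁅e i, X⁆ (J (e i)) = ∑ i, g ⁅X, J (e i)⁆ (e i) := by
    calc ∑ i, g ⁅e i, X⁆ (J (e i))
        = ∑ i, g (J (LieAlgebra.ad ℝ L X (e i))) (e i) := by
          simp only [hskew, LieAlgebra.ad_apply, ← lie_skew X, map_neg, LinearMap.neg_apply]
      _ = ∑ i, g (LieAlgebra.ad ℝ L X (J (e i))) (e i) :=
          sum_apply_comp_comm_of_orthonormal he _ _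
      _ = ∑ i, g ⁅X, J (e i)⁆ (e i) := rfl
  simp only [hterm, ← Finset.mul_sum, Finset.sum_add_distrib, Finset.sum_sub_distrib, hcancel,
    sub_self, zero_add, map_sum, LinearMap.sum_apply]

end Koszul

theorem codifferential_formula_general {L : Type*} [LieRing L] [LieAlgebra ℝ L]
    (n : ℕ)
    (g : L →ₗ[ℝ] L →ₗ[ℝ] ℝ) (hsymm : ∀ x y, g x y = g y x)
    (J : L →ₗ[ℝ] L) (hJ2 : ∀ x, J (J x) = -x)
    (hcomp : ∀ x y, g (J x) (J y) = g x y)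
    (e : Module.Basis (Fin (2 * n)) ℝ L)
    (honb : ∀ i j, g (e i) (e j) = if i = j then (1 : ℝ) else 0)
    (nab : L → L → L)
    (hKoszul : ∀ X Y Z : L,
      2 * g (nab X Y) Z = g ⁅X, Y⁆ Z - g ⁅Y, Z⁆ X + g ⁅Z, X⁆ Y)
    (F : L → L → ℝ) (hF : ∀ X Y, F X Y = g X (J Y))
    (X : L) :
    -∑ i, (-F (nab (e i) (e i)) X - F (e i) (nab (e i) X)) =
      LinearMap.trace ℝ L (LieAlgebra.ad ℝ L (J X)) -
        (1 / 2) * g (∑ i, ⁅J (e i), e i⁆) X := by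
  calc -∑ i, (-F (nab (e i) (e i)) X - F (e i) (nab (e i) X))
      = ∑ i, g (nab (e i) (e i)) (J X) + ∑ i, g (e i) (J (nab (e i) X)) := by
        simp only [hF, Finset.sum_sub_distrib, Finset.sum_neg_distrib]
        ring
    _ = _ := by
        rw [sum_koszul_nab_basis_self hKoszul honb,
          sum_koszul_apply_J_nab_basis hKoszul hsymm hJ2 hcomp honb]
        ring

/-- On a `2n`-dimensional Lie algebra with Hermitian structure `(J, g)` and
orthonormal basis `e₁, …, e_{2n}`, the codifferential of the fundamental form
`F(X,Y) = g(X, JY)` satisfies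
`d*F(X) = tr(ad_{JX}) - (1/2) g(∑ᵢ ⁅J eᵢ, eᵢ⁆, X)`,
where `d*F(X) = -∑ᵢ (∇^g_{eᵢ} F)(eᵢ, X)`, `∇^g` being the Levi-Civita connection. -/
theorem codifferential_formula {L : Type*} [LieRing L] [LieAlgebra ℝ L]
    [Module.Finite ℝ L] (n : ℕ)
    (g : L →ₗ[ℝ] L →ₗ[ℝ] ℝ) (hsymm : ∀ x y, g x y = g y x)
    (J : L →ₗ[ℝ] L) (hJ2 : ∀ x, J (J x) = -x)
    (hN : ∀ x y : L, ⁅J x, J y⁆ - J ⁅J x, y⁆ - J ⁅x, J y⁆ - ⁅x, y⁆ = 0)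
    (hcomp : ∀ x y, g (J x) (J y) = g x y)
    (e : Module.Basis (Fin (2 * n)) ℝ L)
    (honb : ∀ i j, g (e i) (e j) = if i = j then (1 : ℝ) else 0)
    (nab : L → L → L)
    (hKoszul : ∀ X Y Z : L,
      2 * g (nab X Y) Z = g ⁅X, Y⁆ Z - g ⁅Y, Z⁆ X + g ⁅Z, X⁆ Y)
    (F : L → L → ℝ) (hF : ∀ X Y, F X Y = g X (J Y))
    (X : L) :
    -∑ i, (-F (nab (e i) (e i)) X - F (e i) (nab (e i) X)) =
      LinearMap.trace ℝ L (LieAlgebra.ad ℝ L (J X)) -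
        (1 / 2) * g (∑ i, ⁅J (e i), e i⁆) X :=
  codifferential_formula_general n g hsymm J hJ2 hcomp e honb nab hKoszul F hF X
end

section
/- Let $(J,F)$ be a Hermitian structure with $J$ abelian on a $2n$-dimensional Lie algebra $\mathfrak{g}$, with adapted orthonormal basis $\{e_1,\ldots,e_{2n}\}$. Then the Bismut connection $1$-forms are given by $\sigma^i_j=-\sum_{k=1}^{2n}c^k_{ij}e^k$, and moreover $\sigma^{2i}_{2j}=\sigma^{2i-1}_{2j-1}$ and $\sigma^{2i-1}_{2j}=-\sigma^{2i}_{2j-1}$ for all $i,j=1,\ldots,n$. -/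
/-! For an abelian complex structure the torsion `T = J dF` of the Bismut connection satisfies
`g(T X Y, Z) = -g([X,Y],Z) + g([X,Z],Y) - g([Y,Z],X)`, since `J` can be moved through every
bracket. Added to the Koszul formula, half of this torsion cancels everything except one term, so
`g(∇_X Y, Z) = g([Z,Y], X)`. Evaluated on an orthonormal basis this is `σ^i_j(e_k) = e^k([e_i,e_j])`,
and the two symmetries follow from `e_{2i} = -J e_{2i-1}` and `[Jx, Jy] = [x, y]`. -/

theorem Module.Basis.apply_basis_eq_coord {ι R M : Type*} [DecidableEq ι] [CommRing R]
    [AddCommGroup M] [Module R M] (b : Module.Basis ι R M) (g : M →ₗ[R] M →ₗ[R] R)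
    (hg : ∀ i j, g (b i) (b j) = if i = j then 1 else 0) (v : M) (k : ι) :
    g v (b k) = b.coord k v := by
  have hdual : g = b.toDual := LinearMap.ext_basis b b fun i j => by rw [hg, b.toDual_apply]
  rw [hdual, b.toDual_apply_left, Module.Basis.coord_apply]

section AbelianComplexStructure

variable {R L : Type*} [CommRing R] [LieRing L] [LieAlgebra R L]

theorem lie_apply_left_eq_neg_lie_apply_right (J : L →ₗ[R] L) (hJ2 : ∀ x, J (J x) = -x)
    (hab : ∀ x y : L, ⁅J x, J y⁆ = ⁅x, y⁆) (x y : L) : ⁅J x, y⁆ = -⁅x, J y⁆ := by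
  rw [← hab x (J y), hJ2, lie_neg, neg_neg]

theorem torsion_apply_of_abelian (g : L →ₗ[R] L →ₗ[R] R) (J : L →ₗ[R] L)
    (hJ2 : ∀ x, J (J x) = -x) (hab : ∀ x y : L, ⁅J x, J y⁆ = ⁅x, y⁆)
    (F : L → L → R) (hF : ∀ X Y, F X Y = g X (J Y))
    (dF : L → L → L → R) (hdF : ∀ X Y Z, dF X Y Z = -F ⁅X, Y⁆ Z + F ⁅X, Z⁆ Y - F ⁅Y, Z⁆ X)
    (T : L → L → L) (hT : ∀ X Y Z : L, g (T X Y) Z = -dF (J X) (J Y) (J Z)) (X Y Z : L) :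
    g (T X Y) Z = -g ⁅X, Y⁆ Z + g ⁅X, Z⁆ Y - g ⁅Y, Z⁆ X := by
  simp only [hT, hdF, hab, hF, hJ2, map_neg]
  ring

end AbelianComplexStructure

theorem bismut_apply_of_abelian {L : Type*} [LieRing L] [LieAlgebra ℝ L]
    (g : L →ₗ[ℝ] L →ₗ[ℝ] ℝ) (J : L →ₗ[ℝ] L) (hJ2 : ∀ x, J (J x) = -x)
    (hab : ∀ x y : L, ⁅J x, J y⁆ = ⁅x, y⁆)
    (F : L → L → ℝ) (hF : ∀ X Y, F X Y = g X (J Y))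
    (dF : L → L → L → ℝ) (hdF : ∀ X Y Z, dF X Y Z = -F ⁅X, Y⁆ Z + F ⁅X, Z⁆ Y - F ⁅Y, Z⁆ X)
    (nabG : L → L → L)
    (hKoszul : ∀ X Y Z : L, 2 * g (nabG X Y) Z = g ⁅X, Y⁆ Z - g ⁅Y, Z⁆ X + g ⁅Z, X⁆ Y)
    (T : L → L → L) (hT : ∀ X Y Z : L, g (T X Y) Z = -dF (J X) (J Y) (J Z))
    (nab : L → L → L) (hnab : ∀ X Y, nab X Y = nabG X Y + (1 / 2 : ℝ) • T X Y) (X Y Z : L) :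
    g (nab X Y) Z = g ⁅Z, Y⁆ X := by
  have hTXY := torsion_apply_of_abelian g J hJ2 hab F hF dF hdF T hT X Y Z
  have hK := hKoszul X Y Z
  simp only [hnab, map_add, map_smul, LinearMap.add_apply, LinearMap.smul_apply, smul_eq_mul]
  rw [← lie_skew Z X, ← lie_skew Z Y, map_neg, LinearMap.neg_apply] at *
  linarith

/-- The basis is indexed by `Fin n × Bool`, with `(i, false) ↦ e_{2i-1}` and `(i, true) ↦ e_{2i}`;
since `σ^i_j(e_k) = g(∇_{e_k} e_j, e_i)`, the formula `σ^i_j = -∑ₖ c^k_{ij} e^k` reads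
`σ^i_j(e_k) = e^k(⁅e_i, e_j⁆)`. -/
theorem bismut_connection_one_forms_general {L : Type*} [LieRing L] [LieAlgebra ℝ L] (n : ℕ)
    (g : L →ₗ[ℝ] L →ₗ[ℝ] ℝ)
    (J : L →ₗ[ℝ] L) (hJ2 : ∀ x, J (J x) = -x)
    (hab : ∀ x y : L, ⁅J x, J y⁆ = ⁅x, y⁆)
    (b : Module.Basis (Fin n × Bool) ℝ L)
    (hadapt : ∀ k : Fin n, J (b (k, false)) = -b (k, true))
    (honb : ∀ i j, g (b i) (b j) = if i = j then (1 : ℝ) else 0)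
    (F : L → L → ℝ) (hF : ∀ X Y, F X Y = g X (J Y))
    (dF : L → L → L → ℝ)
    (hdF : ∀ X Y Z, dF X Y Z = -F ⁅X, Y⁆ Z + F ⁅X, Z⁆ Y - F ⁅Y, Z⁆ X)
    -- Levi-Civita connection via the Koszul formula
    (nabG : L → L → L)
    (hKoszul : ∀ X Y Z : L,
      2 * g (nabG X Y) Z = g ⁅X, Y⁆ Z - g ⁅Y, Z⁆ X + g ⁅Z, X⁆ Y)
    -- the totally skew-symmetric torsion `T = JdF`
    (T : L → L → L)
    (hT : ∀ X Y Z : L, g (T X Y) Z = -dF (J X) (J Y) (J Z))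
    -- the Bismut connection `∇ = ∇^g + (1/2) T`
    (nab : L → L → L)
    (hnab : ∀ X Y, nab X Y = nabG X Y + (1 / 2 : ℝ) • T X Y) :
    (∀ i j k : Fin n × Bool, g (nab (b k) (b j)) (b i) = b.coord k ⁅b i, b j⁆) ∧
      (∀ (i j : Fin n) (X : L),
        g (nab X (b (j, true))) (b (i, true)) = g (nab X (b (j, false))) (b (i, false))) ∧
      (∀ (i j : Fin n) (X : L),
        g (nab X (b (j, true))) (b (i, false)) =
          -g (nab X (b (j, false))) (b (i, true))) := by
  have hnab_apply := bismut_apply_of_abelian g J hJ2 hab F hF dF hdF nabG hKoszul T hT nab hnab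
  have hJb : ∀ k : Fin n, b (k, true) = -J (b (k, false)) := fun k => by rw [hadapt, neg_neg]
  refine ⟨fun i j k => ?_, fun i j X => ?_, fun i j X => ?_⟩
  · rw [hnab_apply, b.apply_basis_eq_coord g honb]
  · rw [hnab_apply, hnab_apply, hJb i, hJb j, neg_lie, lie_neg, neg_neg, hab]
  · rw [hnab_apply, hnab_apply, hJb i, hJb j, lie_neg, neg_lie,
      lie_apply_left_eq_neg_lie_apply_right J hJ2 hab, neg_neg, map_neg, LinearMap.neg_apply]

/-- On a `2n`-dimensional Lie algebra with Hermitian structure `(J, F)`, `J` abelian,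
with adapted orthonormal basis (indexed by `Fin n × Bool`, `(i, false) ↦ e_{2i-1}`,
`(i, true) ↦ e_{2i}`), the Bismut connection 1-forms `σ^i_j(eₖ) = g(∇_{eₖ} eⱼ, eᵢ)`
satisfy `σ^i_j = -∑ₖ c^k_{ij} e^k`, i.e. `σ^i_j(eₖ) = e^k(⁅eᵢ, eⱼ⁆)`, together with
`σ^{2i}_{2j} = σ^{2i-1}_{2j-1}` and `σ^{2i-1}_{2j} = -σ^{2i}_{2j-1}`. -/
theorem bismut_connection_one_forms {L : Type*} [LieRing L] [LieAlgebra ℝ L] (n : ℕ)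
    (g : L →ₗ[ℝ] L →ₗ[ℝ] ℝ) (hsymm : ∀ x y, g x y = g y x)
    (J : L →ₗ[ℝ] L) (hJ2 : ∀ x, J (J x) = -x)
    (hab : ∀ x y : L, ⁅J x, J y⁆ = ⁅x, y⁆)
    (hcomp : ∀ x y, g (J x) (J y) = g x y)
    (b : Module.Basis (Fin n × Bool) ℝ L)
    (hadapt : ∀ k : Fin n, J (b (k, false)) = -b (k, true))
    (honb : ∀ i j, g (b i) (b j) = if i = j then (1 : ℝ) else 0)
    (F : L → L → ℝ) (hF : ∀ X Y, F X Y = g X (J Y))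
    (dF : L → L → L → ℝ)
    (hdF : ∀ X Y Z, dF X Y Z = -F ⁅X, Y⁆ Z + F ⁅X, Z⁆ Y - F ⁅Y, Z⁆ X)
    -- Levi-Civita connection via the Koszul formula
    (nabG : L → L → L)
    (hKoszul : ∀ X Y Z : L,
      2 * g (nabG X Y) Z = g ⁅X, Y⁆ Z - g ⁅Y, Z⁆ X + g ⁅Z, X⁆ Y)
    -- the totally skew-symmetric torsion `T = JdF`
    (T : L → L → L)
    (hT : ∀ X Y Z : L, g (T X Y) Z = -dF (J X) (J Y) (J Z))
    -- the Bismut connection `∇ = ∇^g + (1/2) T`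
    (nab : L → L → L)
    (hnab : ∀ X Y, nab X Y = nabG X Y + (1 / 2 : ℝ) • T X Y) :
    (∀ i j k : Fin n × Bool, g (nab (b k) (b j)) (b i) = b.coord k ⁅b i, b j⁆) ∧
      (∀ (i j : Fin n) (X : L),
        g (nab X (b (j, true))) (b (i, true)) = g (nab X (b (j, false))) (b (i, false))) ∧
      (∀ (i j : Fin n) (X : L),
        g (nab X (b (j, true))) (b (i, false)) =
          -g (nab X (b (j, false))) (b (i, true))) :=
  bismut_connection_one_forms_general n g J hJ2 hab b hadapt honb F hF dF hdF nabG hKoszul T hT nab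
    hnab
end

section
/- Let $(J,F)$ be a Hermitian structure with $J$ abelian on a Lie algebra $\mathfrak{g}$, and let $\nabla$ be the Bismut connection. A $1$-form $\eta\in\mathfrak{g}^*$ satisfies $\nabla\eta=0$ if and only if $\eta=g(\cdot,Z_0)$ for some $Z_0$ in the center of $\mathfrak{g}$. More precisely, for $\eta=g(\cdot,Z_0)$ one has $(\nabla_X\eta)(Y)=g([Y,Z_0],X)$ for all $X,Y\in\mathfrak{g}$. -/
/-- Let `(J, F)` be a Hermitian structure with `J` abelian on a Lie algebra `𝔤`, and
let `∇` be the Bismut connection.  A 1-form `η` satisfies `∇η = 0` (i.e.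
`η(∇_X Y) = 0` for all `X, Y`) if and only if `η = g(·, Z₀)` for some `Z₀` in the
center of `𝔤`.  More precisely, for `η = g(·, Z₀)` one has
`(∇_X η)(Y) = -η(∇_X Y) = g(⁅Y, Z₀⁆, X)` for all `X, Y`. -/
theorem bismut_parallel_one_forms {L : Type*} [LieRing L] [LieAlgebra ℝ L]
    [FiniteDimensional ℝ L]
    (g : L →ₗ[ℝ] L →ₗ[ℝ] ℝ) (hsymm : ∀ x y, g x y = g y x)
    (hpos : ∀ x : L, x ≠ 0 → 0 < g x x)
    (J : L →ₗ[ℝ] L) (hJ2 : ∀ x, J (J x) = -x)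
    (hab : ∀ x y : L, ⁅J x, J y⁆ = ⁅x, y⁆)
    (hcomp : ∀ x y, g (J x) (J y) = g x y)
    (F : L → L → ℝ) (hF : ∀ X Y, F X Y = g X (J Y))
    (dF : L → L → L → ℝ)
    (hdF : ∀ X Y Z, dF X Y Z = -F ⁅X, Y⁆ Z + F ⁅X, Z⁆ Y - F ⁅Y, Z⁆ X)
    (nabG : L → L → L)
    (hKoszul : ∀ X Y Z : L,
      2 * g (nabG X Y) Z = g ⁅X, Y⁆ Z - g ⁅Y, Z⁆ X + g ⁅Z, X⁆ Y)
    (T : L → L → L)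
    (hT : ∀ X Y Z : L, g (T X Y) Z = -dF (J X) (J Y) (J Z))
    (nab : L → L → L)
    (hnab : ∀ X Y, nab X Y = nabG X Y + (1 / 2 : ℝ) • T X Y) :
    (∀ η : Module.Dual ℝ L,
      (∀ X Y : L, -η (nab X Y) = 0) ↔
        ∃ Z₀ : L, (∀ X, η X = g X Z₀) ∧ Z₀ ∈ LieAlgebra.center ℝ L) ∧
      (∀ Z₀ X Y : L, -g (nab X Y) Z₀ = g ⁅Y, Z₀⁆ X) := by
  -- torsion formula
  have hT' : ∀ X Y Z : L, g (T X Y) Z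
      = -g ⁅X, Y⁆ Z - g ⁅Z, X⁆ Y - g ⁅Y, Z⁆ X := by
    intro X Y Z
    rw [hT, hdF, hF, hF, hF, hab, hab, hab, hJ2, hJ2, hJ2,
      show (⁅X, Z⁆ : L) = -⁅Z, X⁆ from (lie_skew X Z).symm]
    simp only [map_neg, LinearMap.neg_apply]
    ring
  -- main formula
  have hmain : ∀ X Y Z : L, g (nab X Y) Z = -g ⁅Y, Z⁆ X := by
    intro X Y Z
    have h1 : g (nab X Y) Z = g (nabG X Y) Z + (1 / 2 : ℝ) * g (T X Y) Z := by
      rw [hnab]; simp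
    have h2 := hKoszul X Y Z
    have h3 := hT' X Y Z
    linarith
  constructor
  · intro η
    constructor
    · intro hpar
      -- Riesz representation
      have hinj : Function.Injective (g.flip) := by
        rw [← LinearMap.ker_eq_bot, LinearMap.ker_eq_bot']
        intro z hz
        by_contra hne
        have := hpos z hne
        have hz0 : g z z = 0 := by
          have : g.flip z z = 0 := by rw [hz]; rfl
          simpa using this
        linarith
      have hsurj : Function.Surjective (g.flip) :=
        (LinearMap.injective_iff_surjective_of_finrank_eq_finrank
          (Subspace.dual_finrank_eq).symm).mp hinj
      obtain ⟨Z₀, hZ₀⟩ := hsurj η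
      refine ⟨Z₀, fun X => by rw [← hZ₀]; rfl, ?_⟩
      rw [LieModule.mem_maxTrivSubmodule]
      intro Y
      have hall : ∀ X : L, g ⁅Y, Z₀⁆ X = 0 := by
        intro X
        have h := hpar X Y
        have : η (nab X Y) = g (nab X Y) Z₀ := by rw [← hZ₀]; rfl
        rw [this, hmain] at h
        linarith
      by_contra hne
      have := hpos _ hne
      have := hall ⁅Y, Z₀⁆
      linarith
    · rintro ⟨Z₀, hη, hc⟩
      intro X Y
      rw [LieModule.mem_maxTrivSubmodule] at hc
      have : η (nab X Y) = g (nab X Y) Z₀ := hη _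
      rw [this, hmain, hc Y]
      simp
  · intro Z₀ X Y
    rw [hmain]
    have := hsymm ⁅Y, Z₀⁆ X
    linarith
end

section
/- Let $(J,F)$ be an abelian balanced Hermitian structure on a $2n$-dimensional unimodular Lie algebra. Then the Bismut curvature $2$-forms satisfy $\sum_{k=1}^n \Omega^{2k-1}_{2k}=0$, where $\Omega^i_j=d\sigma^i_j+\sum_{k=1}^{2n}\sigma^i_k\wedge\sigma^k_j$ and $\sigma^i_j=-\sum_k c^k_{ij}e^k$ in an adapted basis. -/
/-!
The curvature sum splits into a linear part `-∑ₖ σ^{2k-1}_{2k}([X, Y])` and a quadratic part.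
Since `σ^i_j` is the dual of `[e_i, e_j]` with respect to the orthonormal basis, the linear part is the dual of
`∑ₖ [e_{2k-1}, e_{2k}]`, which is half of `∑ᵢ [J e_i, e_i]` and so vanishes by balancedness.
Because `J` is abelian, `σ^{2k-1}_{2m-1}` is antisymmetric and `σ^{2k-1}_{2m}` symmetric in `(k, m)`,
and the quadratic part collapses to twice a sum `∑_{k,m} a_{km} ∧ c_{km}` of wedges of an
antisymmetric and a symmetric family, which vanishes.
-/

theorem Module.Basis.toDual_eq_sum_coord {ι R M : Type*} [Fintype ι] [DecidableEq ι] [CommRing R]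
    [AddCommGroup M] [Module R M] (b : Module.Basis ι R M) (v : M) :
    b.toDual v = ∑ k, b.coord k v • b.coord k := by
  refine b.ext fun i ↦ ?_
  simp [Module.Basis.toDual_apply_left, Finsupp.single_apply]

theorem sum_sum_mul_eq_zero_of_antisymm_of_symm {ι R : Type*} [Fintype ι] [CommRing R]
    [IsAddTorsionFree R] (A B : ι → ι → R) (hA : ∀ i j, A j i = -A i j)
    (hB : ∀ i j, B j i = B i j) : ∑ i, ∑ j, A i j * B i j = 0 := by
  refine self_eq_neg.mp ?_
  calc ∑ i, ∑ j, A i j * B i j = ∑ i, ∑ j, A j i * B j i := Finset.sum_comm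
    _ = ∑ i, ∑ j, -(A i j * B i j) := by
        refine Finset.sum_congr rfl fun i _ ↦ Finset.sum_congr rfl fun j _ ↦ ?_
        rw [hA, hB, neg_mul]
    _ = -∑ i, ∑ j, A i j * B i j := by simp only [Finset.sum_neg_distrib]

/-- The symmetries of `[e_i, e_j]` for an abelian `J` in an adapted basis, indexed by
`(k, false) ↦ e_{2k-1}`, `(k, true) ↦ e_{2k}`. -/
structure IsAbelianAdapted {ι M : Type*} [AddCommGroup M] (s : ι × Bool → ι × Bool → M) :
    Prop where
  antisymm : ∀ i j, s j i = -s i j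
  false_true : ∀ k m, s (m, false) (k, true) = s (k, false) (m, true)
  true_true : ∀ k m, s (m, true) (k, true) = s (m, false) (k, false)

namespace IsAbelianAdapted

variable {ι M N : Type*} [AddCommGroup M] [AddCommGroup N] {s : ι × Bool → ι × Bool → M}

theorem map (hs : IsAbelianAdapted s) (f : M →+ N) : IsAbelianAdapted fun i j ↦ f (s i j) where
  antisymm i j := by rw [hs.antisymm, map_neg]
  false_true k m := by rw [hs.false_true]
  true_true k m := by rw [hs.true_true]

theorem sum_wedge_eq_zero {R : Type*} [Fintype ι] [CommRing R] [IsAddTorsionFree R]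
    {s t : ι × Bool → ι × Bool → R} (hs : IsAbelianAdapted s) (ht : IsAbelianAdapted t) :
    ∑ k, ∑ m, (s (k, false) m * t m (k, true) - t (k, false) m * s m (k, true)) = 0 := by
  have hsum : ∀ {u v : ι × Bool → ι × Bool → R},
      IsAbelianAdapted u → IsAbelianAdapted v →
        ∑ k, ∑ m, u (k, false) (m, false) * v (k, false) (m, true) = 0 := fun hu hv ↦
    sum_sum_mul_eq_zero_of_antisymm_of_symm _ _ (fun _ _ ↦ hu.antisymm _ _) hv.false_true
  calc _ = ∑ k, ∑ m, (2 * (s (k, false) (m, false) * t (k, false) (m, true)) -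
        2 * (t (k, false) (m, false) * s (k, false) (m, true))) := by
        refine Finset.sum_congr rfl fun k _ ↦ ?_
        rw [Fintype.sum_prod_type]
        refine Finset.sum_congr rfl fun m _ ↦ ?_
        rw [Fintype.sum_bool, hs.true_true, ht.true_true, hs.false_true, ht.false_true,
          hs.antisymm (m, false), ht.antisymm (m, false)]
        ring
    _ = 0 := by simp only [Finset.sum_sub_distrib, ← Finset.mul_sum, hsum hs ht, hsum ht hs,
        sub_self, mul_zero]

end IsAbelianAdapted

section AdaptedBasis

variable {L : Type*} [LieRing L] [LieAlgebra ℝ L] {n : ℕ} {J : L →ₗ[ℝ] L}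
  {b : Module.Basis (Fin n × Bool) ℝ L}

theorem apply_basis_true_of_adapted (hJ2 : ∀ x, J (J x) = -x)
    (hadapt : ∀ k : Fin n, J (b (k, false)) = -b (k, true)) (k : Fin n) :
    J (b (k, true)) = b (k, false) := by
  simpa [hadapt] using hJ2 (b (k, false))

theorem isAbelianAdapted_lie_basis (hJ2 : ∀ x, J (J x) = -x)
    (hab : ∀ x y : L, ⁅J x, J y⁆ = ⁅x, y⁆)
    (hadapt : ∀ k : Fin n, J (b (k, false)) = -b (k, true)) :
    IsAbelianAdapted fun i j ↦ ⁅b i, b j⁆ where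
  antisymm i j := (lie_skew _ _).symm
  false_true k m := by
    simpa [hadapt, apply_basis_true_of_adapted hJ2 hadapt] using
      (hab (b (m, false)) (b (k, true))).symm
  true_true k m := by simpa [hadapt] using hab (b (m, false)) (b (k, false))

theorem sum_lie_basis_eq_zero_of_balanced (hJ2 : ∀ x, J (J x) = -x)
    (hadapt : ∀ k : Fin n, J (b (k, false)) = -b (k, true))
    (hbal : ∑ i : Fin n × Bool, ⁅J (b i), b i⁆ = 0) :
    ∑ k : Fin n, ⁅b (k, false), b (k, true)⁆ = 0 := by
  have htwice : (2 : ℝ) • ∑ k : Fin n, ⁅b (k, false), b (k, true)⁆ = 0 := by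
    simpa [two_smul, Fintype.sum_prod_type, hadapt, apply_basis_true_of_adapted hJ2 hadapt,
      Finset.sum_add_distrib] using hbal
  exact (smul_eq_zero.mp htwice).resolve_left two_ne_zero

end AdaptedBasis

theorem bismut_curvature_trace_zero_general {L : Type*} [LieRing L] [LieAlgebra ℝ L]
    (n : ℕ)
    (J : L →ₗ[ℝ] L) (hJ2 : ∀ x, J (J x) = -x)
    (hab : ∀ x y : L, ⁅J x, J y⁆ = ⁅x, y⁆)
    (b : Module.Basis (Fin n × Bool) ℝ L)
    (hadapt : ∀ k : Fin n, J (b (k, false)) = -b (k, true))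
    -- the balanced condition
    (hbal : ∑ i : Fin n × Bool, ⁅J (b i), b i⁆ = 0)
    -- the Bismut connection 1-forms `σ^i_j = -∑ₖ c^k_{ij} e^k`
    (σ : Fin n × Bool → Fin n × Bool → Module.Dual ℝ L)
    (hσ : ∀ i j, σ i j = ∑ k : Fin n × Bool, b.coord k ⁅b i, b j⁆ • b.coord k)
    -- the curvature 2-forms `Ω^i_j = dσ^i_j + ∑ₖ σ^i_k ∧ σ^k_j`
    (Ω : Fin n × Bool → Fin n × Bool → L → L → ℝ)
    (hΩ : ∀ i j X Y, Ω i j X Y =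
      -σ i j ⁅X, Y⁆ + ∑ k : Fin n × Bool, (σ i k X * σ k j Y - σ i k Y * σ k j X)) :
    ∀ X Y : L, ∑ k : Fin n, Ω (k, false) (k, true) X Y = 0 := by
  intro X Y
  have hσ_dual : σ = fun i j ↦ b.toDual ⁅b i, b j⁆ := by
    ext i j : 2
    rw [hσ, b.toDual_eq_sum_coord]
  have hσ_abelian : IsAbelianAdapted σ := hσ_dual ▸
    (isAbelianAdapted_lie_basis hJ2 hab hadapt).map b.toDual.toAddMonoidHom
  have hlinear : ∑ k : Fin n, σ (k, false) (k, true) = 0 := by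
    simp only [hσ_dual, ← map_sum, sum_lie_basis_eq_zero_of_balanced hJ2 hadapt hbal, map_zero]
  have hquadratic := (hσ_abelian.map (LinearMap.applyₗ X).toAddMonoidHom).sum_wedge_eq_zero
    (hσ_abelian.map (LinearMap.applyₗ Y).toAddMonoidHom)
  simp only [LinearMap.toAddMonoidHom_coe, LinearMap.applyₗ_apply_apply] at hquadratic
  simp only [hΩ, Finset.sum_add_distrib, hquadratic, add_zero, Finset.sum_neg_distrib,
    neg_eq_zero]
  rw [← LinearMap.sum_apply, hlinear, LinearMap.zero_apply]

/-- For an abelian balanced Hermitian structure `(J, F)` on a `2n`-dimensional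
unimodular Lie algebra with adapted orthonormal basis (indexed by `Fin n × Bool`,
`(k, false) ↦ e_{2k-1}`, `(k, true) ↦ e_{2k}`), the Bismut curvature 2-forms
`Ω^i_j = dσ^i_j + ∑ₖ σ^i_k ∧ σ^k_j`, where `σ^i_j = -∑ₖ c^k_{ij} e^k`, satisfy
`∑ₖ Ω^{2k-1}_{2k} = 0`. -/
theorem bismut_curvature_trace_zero {L : Type*} [LieRing L] [LieAlgebra ℝ L]
    [Module.Finite ℝ L] (n : ℕ)
    (hunimod : ∀ X : L, LinearMap.trace ℝ L (LieAlgebra.ad ℝ L X) = 0)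
    (g : L →ₗ[ℝ] L →ₗ[ℝ] ℝ) (hsymm : ∀ x y, g x y = g y x)
    (J : L →ₗ[ℝ] L) (hJ2 : ∀ x, J (J x) = -x)
    (hab : ∀ x y : L, ⁅J x, J y⁆ = ⁅x, y⁆)
    (hcomp : ∀ x y, g (J x) (J y) = g x y)
    (b : Module.Basis (Fin n × Bool) ℝ L)
    (hadapt : ∀ k : Fin n, J (b (k, false)) = -b (k, true))
    (honb : ∀ i j, g (b i) (b j) = if i = j then (1 : ℝ) else 0)
    -- the balanced condition
    (hbal : ∑ i : Fin n × Bool, ⁅J (b i), b i⁆ = 0)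
    -- the Bismut connection 1-forms `σ^i_j = -∑ₖ c^k_{ij} e^k`
    (σ : Fin n × Bool → Fin n × Bool → Module.Dual ℝ L)
    (hσ : ∀ i j, σ i j = ∑ k : Fin n × Bool, b.coord k ⁅b i, b j⁆ • b.coord k)
    -- the curvature 2-forms `Ω^i_j = dσ^i_j + ∑ₖ σ^i_k ∧ σ^k_j`
    (Ω : Fin n × Bool → Fin n × Bool → L → L → ℝ)
    (hΩ : ∀ i j X Y, Ω i j X Y =
      -σ i j ⁅X, Y⁆ + ∑ k : Fin n × Bool, (σ i k X * σ k j Y - σ i k Y * σ k j X)) :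
    ∀ X Y : L, ∑ k : Fin n, Ω (k, false) (k, true) X Y = 0 :=
  bismut_curvature_trace_zero_general n J hJ2 hab b hadapt hbal σ hσ Ω hΩ
end

section
/- Let $\mathfrak{g}=\mathfrak{h}_{2n+1}\times\mathbb{R}^{2k+1}$ where $\mathfrak{h}_{2n+1}$ is the real Heisenberg Lie algebra. If $n\geq 2$ and $1\le r\le n-1$, then for the abelian complex structure $J_r$ ($J_re_{2i-1}=-e_{2i}$ for $i\le r$, $J_re_{2i-1}=e_{2i}$ for $i>r$, $Jz_{2j}=-z_{2j+1}$) there exists a $J_r$-compatible inner product whose fundamental form is balanced; explicitly, the basis $f_1=\sqrt{n+1-2r}\,e_1$, $f_2=\sqrt{n+1-2r}\,e_2$, $f_{2i}=-e_{2i}$ for $i>r$, $f_i=e_i$ otherwise, together with $z_0,\ldots,z_{2k+1}$, is $J_r$-adapted and satisfies $\sum_i[J_rf_i,f_i]=0$ (here $n+1-2r$ may be assumed positive by replacing $r$ with $n-r$). -/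
/-!
Call a family `v : κ × Bool → L` adapted to `J` when `J (v (a, false)) = -v (a, true)`; with
`J² = -1` this forces `J (v (a, true)) = v (a, false)`, so `J` permutes an adapted basis up to
sign and the inner product making it orthonormal (`Basis.toDual`) is `J`-invariant. For an
adapted family the pairs collapse: `∑ₚ ⁅J vₚ, vₚ⁆ = 2 ∑ₐ ⁅v (a, false), v (a, true)⁆`.
For the basis `f` only the Heisenberg pairs contribute, each a multiple of `z₀`, with
coefficients `n + 1 - 2r` for the first pair, `1` for the next `r - 1` and `-1` for the
remaining `n - r`; these add up to `0`.
-/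

open Module

namespace Module.Basis

variable {ι R M : Type*} [CommRing R] [AddCommGroup M] [Module R M]

theorem toDual_apply_eq_sum [Fintype ι] [DecidableEq ι] (v : Basis ι R M) (x y : M) :
    v.toDual x y = ∑ i, v.repr x i * v.repr y i := by
  have h : v.toDual = LinearMap.mk₂ R (fun x y => ∑ i, v.repr x i * v.repr y i)
      (by simp [add_mul, Finset.sum_add_distrib]) (by simp [Finset.mul_sum, mul_assoc])
      (by simp [mul_add, Finset.sum_add_distrib]) (by simp [Finset.mul_sum, mul_left_comm]) :=
    LinearMap.ext_basis v v fun i j => by simp [toDual_apply, Finsupp.single_apply]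
  rw [h, LinearMap.mk₂_apply]

theorem toDual_comm [DecidableEq ι] [Finite ι] (v : Basis ι R M) (x y : M) :
    v.toDual x y = v.toDual y x := by
  have := Fintype.ofFinite ι
  simp only [toDual_apply_eq_sum, mul_comm]

theorem toDual_self_pos {K : Type*} [Field K] [LinearOrder K] [IsStrictOrderedRing K]
    [Module K M] [DecidableEq ι] [Finite ι] (v : Basis ι K M) {x : M} (hx : x ≠ 0) :
    0 < v.toDual x x := by
  have := Fintype.ofFinite ι
  obtain ⟨i, hi⟩ : ∃ i, v.repr x i ≠ 0 := by
    by_contra! h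
    exact hx (v.repr.map_eq_zero_iff.mp (Finsupp.ext h))
  rw [toDual_apply_eq_sum]
  exact Finset.sum_pos' (fun j _ => mul_self_nonneg _) ⟨i, Finset.mem_univ i, mul_self_pos.mpr hi⟩

theorem toDual_reindex [DecidableEq ι] {ι' : Type*} [DecidableEq ι'] (v : Basis ι R M)
    (e : ι ≃ ι') :
    (v.reindex e).toDual = v.toDual :=
  LinearMap.ext_basis v v fun i j => by
    calc (v.reindex e).toDual (v i) (v j)
        = (v.reindex e).toDual (v.reindex e (e i)) (v.reindex e (e j)) := by simp
      _ = v.toDual (v i) (v j) := by simp only [toDual_apply, e.injective.eq_iff]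

theorem exists_coe_eq_of_smul (b : Basis ι R M) {f : ι → M}
    (hf : ∀ i, ∃ c : R, IsUnit c ∧ f i = c • b i) : ∃ v : Basis ι R M, ⇑v = f := by
  choose c hc hfc using hf
  exact ⟨b.isUnitSMul hc, funext fun i => by rw [isUnitSMul_apply, hfc]⟩

end Module.Basis

section Adapted

variable {κ R L : Type*} [CommRing R]

theorem apply_true_of_adapted [AddCommGroup L] [Module R L] {J : L →ₗ[R] L}
    (hJ : ∀ x, J (J x) = -x) {v : κ × Bool → L} (hv : ∀ a, J (v (a, false)) = -v (a, true))
    (a : κ) : J (v (a, true)) = v (a, false) := by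
  simpa [hv] using hJ (v (a, false))

theorem toDual_apply_apply_of_adapted [DecidableEq κ] [AddCommGroup L] [Module R L]
    {J : L →ₗ[R] L} (hJ : ∀ x, J (J x) = -x) (v : Basis (κ × Bool) R L)
    (hv : ∀ a, J (v (a, false)) = -v (a, true)) (x y : L) :
    v.toDual (J x) (J y) = v.toDual x y := by
  suffices (v.toDual ∘ₗ J).compl₂ J = v.toDual from LinearMap.congr_fun₂ this x y
  refine LinearMap.ext_basis v v fun ⟨a, s⟩ ⟨a', s'⟩ => ?_
  cases s <;> cases s' <;> simp [hv, apply_true_of_adapted hJ hv, Basis.toDual_apply]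

theorem sum_lie_apply_self_of_adapted [Fintype κ] [LieRing L] [Module R L] {J : L →ₗ[R] L}
    (hJ : ∀ x, J (J x) = -x) {v : κ × Bool → L} (hv : ∀ a, J (v (a, false)) = -v (a, true)) :
    ∑ p, ⁅J (v p), v p⁆ = 2 • ∑ a, ⁅v (a, false), v (a, true)⁆ := by
  rw [Fintype.sum_prod_type, Finset.smul_sum]
  refine Finset.sum_congr rfl fun a _ => ?_
  rw [Fintype.sum_bool, apply_true_of_adapted hJ hv, hv, neg_lie, lie_skew, two_nsmul]

end Adapted

theorem Fin.sum_ite_val_lt {R : Type*} [CommRing R] {n r : ℕ} (hrn : r ≤ n) :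
    ∑ i : Fin n, (if (i : ℕ) < r then (1 : R) else -1) = 2 * r - n := by
  have hsign : ∀ i : Fin n,
      (if (i : ℕ) < r then (1 : R) else -1) = 2 * (if (i : ℕ) < r then 1 else 0) - 1 := by
    intro i; split_ifs <;> ring
  simp only [hsign, Finset.sum_sub_distrib, ← Finset.mul_sum, Finset.sum_boole,
    Fin.card_filter_val_lt]
  simp [hrn]

theorem sum_heisenberg_weights {R : Type*} [CommRing R] {n r : ℕ} (hr : 0 < r) (hrn : r ≤ n) :
    ∑ i : Fin n, (if (i : ℕ) = 0 then (n + 1 - 2 * r : R) else if (i : ℕ) < r then 1 else -1) =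
      0 := by
  obtain ⟨m, rfl⟩ : ∃ m, n = m + 1 := ⟨n - 1, by omega⟩
  have hshift : ∀ i : Fin m, (i : ℕ) + 1 < r ↔ (i : ℕ) < r - 1 := fun i => by omega
  rw [Fin.sum_univ_succ]
  simp only [Fin.val_zero, Fin.val_succ, if_true, Nat.add_one_ne_zero, if_false, hshift]
  rw [Fin.sum_ite_val_lt (by omega), Nat.cast_sub hr]
  push_cast
  ring

section Heisenberg

variable {L : Type*} [LieRing L] [LieAlgebra ℝ L] {n k r : ℕ}
  {b : Basis ((Fin n × Bool) ⊕ (Fin (k + 1) × Bool)) ℝ L}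
  {f : (Fin n × Bool) ⊕ (Fin (k + 1) × Bool) → L}

theorem heisenberg_exists_smul_eq (hn : 0 < n) (hc : 0 < (n : ℝ) + 1 - 2 * r)
    (hf0 : ∀ s : Bool, f (Sum.inl (⟨0, hn⟩, s)) =
      Real.sqrt ((n : ℝ) + 1 - 2 * r) • b (Sum.inl (⟨0, hn⟩, s)))
    (hfe : ∀ i : Fin n, 0 < (i : ℕ) → ∀ s : Bool, f (Sum.inl (i, s)) =
      if r ≤ (i : ℕ) ∧ s = true then -b (Sum.inl (i, s)) else b (Sum.inl (i, s)))
    (hfz : ∀ q, f (Sum.inr q) = b (Sum.inr q))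
    (p : (Fin n × Bool) ⊕ (Fin (k + 1) × Bool)) :
    ∃ c : ℝ, IsUnit c ∧ f p = c • b p := by
  rcases p with ⟨i, s⟩ | q
  · rcases Nat.eq_zero_or_pos i with h0 | hi
    · obtain rfl : i = ⟨0, hn⟩ := Fin.ext h0
      exact ⟨_, (Real.sqrt_pos.mpr hc).ne'.isUnit, hf0 s⟩
    · rw [hfe i hi s]
      split_ifs
      · exact ⟨-1, isUnit_one.neg, (neg_one_smul ℝ _).symm⟩
      · exact ⟨1, isUnit_one, (one_smul ℝ _).symm⟩
  · exact ⟨1, isUnit_one, by rw [hfz, one_smul]⟩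

theorem heisenberg_adapted {J : L →ₗ[ℝ] L} (hn : 0 < n) (hr : 0 < r)
    (hJm : ∀ i : Fin n, (i : ℕ) < r → J (b (Sum.inl (i, false))) = -b (Sum.inl (i, true)))
    (hJp : ∀ i : Fin n, r ≤ (i : ℕ) → J (b (Sum.inl (i, false))) = b (Sum.inl (i, true)))
    (hf0 : ∀ s : Bool, f (Sum.inl (⟨0, hn⟩, s)) =
      Real.sqrt ((n : ℝ) + 1 - 2 * r) • b (Sum.inl (⟨0, hn⟩, s)))
    (hfe : ∀ i : Fin n, 0 < (i : ℕ) → ∀ s : Bool, f (Sum.inl (i, s)) =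
      if r ≤ (i : ℕ) ∧ s = true then -b (Sum.inl (i, s)) else b (Sum.inl (i, s)))
    (i : Fin n) : J (f (Sum.inl (i, false))) = -f (Sum.inl (i, true)) := by
  rcases Nat.eq_zero_or_pos i with h0 | hi
  · obtain rfl : i = ⟨0, hn⟩ := Fin.ext h0
    rw [hf0, hf0, map_smul, hJm _ hr, smul_neg]
  · rw [hfe i hi, hfe i hi]
    by_cases hir : (i : ℕ) < r
    · simp [not_le.mpr hir, hJm i hir]
    · simp [not_lt.mp hir, hJp i (not_lt.mp hir)]

theorem heisenberg_lie_pair {z : L} (hn : 0 < n) (hc : 0 ≤ (n : ℝ) + 1 - 2 * r)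
    (hbr : ∀ i : Fin n, ⁅b (Sum.inl (i, false)), b (Sum.inl (i, true))⁆ = z)
    (hf0 : ∀ s : Bool, f (Sum.inl (⟨0, hn⟩, s)) =
      Real.sqrt ((n : ℝ) + 1 - 2 * r) • b (Sum.inl (⟨0, hn⟩, s)))
    (hfe : ∀ i : Fin n, 0 < (i : ℕ) → ∀ s : Bool, f (Sum.inl (i, s)) =
      if r ≤ (i : ℕ) ∧ s = true then -b (Sum.inl (i, s)) else b (Sum.inl (i, s)))
    (i : Fin n) : ⁅f (Sum.inl (i, false)), f (Sum.inl (i, true))⁆ =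
      (if (i : ℕ) = 0 then (n + 1 - 2 * r : ℝ) else if (i : ℕ) < r then 1 else -1) • z := by
  rcases Nat.eq_zero_or_pos i with h0 | hi
  · obtain rfl : i = ⟨0, hn⟩ := Fin.ext h0
    rw [hf0, hf0, smul_lie, lie_smul, smul_smul, Real.mul_self_sqrt hc, hbr, if_pos rfl]
  · rw [hfe i hi, hfe i hi, if_neg hi.ne']
    by_cases hir : (i : ℕ) < r
    · simp [hir, not_le.mpr hir, hbr]
    · simp [hir, not_lt.mp hir, hbr]

end Heisenberg

/-- On `𝔤 = 𝔥_{2n+1} × ℝ^{2k+1}` (Heisenberg times an abelian factor), with the usual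
basis `e₁, …, e_{2n}, z₀, …, z_{2k+1}` (only nonzero brackets `⁅e_{2i-1}, e_{2i}⁆ = z₀`;
here `e`'s are indexed by `Fin n × Bool` and `z`'s by `Fin (k+1) × Bool`, with `z₀`
corresponding to `(0, false)`), suppose `n ≥ 2` and `1 ≤ r ≤ n - 1` with `2r ≤ n`
(the latter may be assumed by replacing `r` with `n - r`).  For the abelian complex
structure `J_r` (`J_r e_{2i-1} = -e_{2i}` for `i ≤ r`, `J_r e_{2i-1} = e_{2i}` for
`i > r`, `J_r z_{2j} = -z_{2j+1}`), the modified basis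
`f₁ = √(n+1-2r) e₁`, `f₂ = √(n+1-2r) e₂`, `f_{2i} = -e_{2i}` for `i > r`, `fᵢ = eᵢ`
otherwise, together with the `z`'s, is `J_r`-adapted and satisfies
`∑ᵢ ⁅J_r fᵢ, fᵢ⁆ = 0`; hence there is a `J_r`-compatible inner product (making this
basis orthonormal) whose fundamental form is balanced. -/
theorem heisenberg_balanced_structure {L : Type*} [LieRing L] [LieAlgebra ℝ L]
    (n k r : ℕ) (hn : 2 ≤ n) (hr1 : 1 ≤ r) (hr3 : 2 * r ≤ n)
    (b : Module.Basis ((Fin n × Bool) ⊕ (Fin (k + 1) × Bool)) ℝ L)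
    -- bracket relations of 𝔥_{2n+1} × ℝ^{2k+1}
    (hbr1 : ∀ i : Fin n, ⁅b (Sum.inl (i, false)), b (Sum.inl (i, true))⁆ =
      b (Sum.inr (⟨0, Nat.succ_pos k⟩, false)))
    (hbr4 : ∀ q q', ⁅b (Sum.inr q), b (Sum.inr q')⁆ = 0)
    -- the abelian complex structure J_r
    (J : L →ₗ[ℝ] L) (hJ2 : ∀ x, J (J x) = -x)
    (hJm : ∀ i : Fin n, (i : ℕ) < r →
      J (b (Sum.inl (i, false))) = -b (Sum.inl (i, true)))
    (hJp : ∀ i : Fin n, r ≤ (i : ℕ) →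
      J (b (Sum.inl (i, false))) = b (Sum.inl (i, true)))
    (hJz : ∀ q : Fin (k + 1), J (b (Sum.inr (q, false))) = -b (Sum.inr (q, true)))
    -- the modified basis f
    (f : (Fin n × Bool) ⊕ (Fin (k + 1) × Bool) → L)
    (hf0 : ∀ s : Bool, f (Sum.inl (⟨0, by omega⟩, s)) =
      Real.sqrt ((n : ℝ) + 1 - 2 * r) • b (Sum.inl (⟨0, by omega⟩, s)))
    (hfe : ∀ i : Fin n, 0 < (i : ℕ) → ∀ s : Bool,
      f (Sum.inl (i, s)) =
        if r ≤ (i : ℕ) ∧ s = true then -b (Sum.inl (i, s)) else b (Sum.inl (i, s)))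
    (hfz : ∀ q, f (Sum.inr q) = b (Sum.inr q)) :
    (∀ i : Fin n, J (f (Sum.inl (i, false))) = -f (Sum.inl (i, true))) ∧
      (∀ q : Fin (k + 1), J (f (Sum.inr (q, false))) = -f (Sum.inr (q, true))) ∧
      (∑ p : (Fin n × Bool) ⊕ (Fin (k + 1) × Bool), ⁅J (f p), f p⁆ = 0) ∧
      ∃ g : L →ₗ[ℝ] L →ₗ[ℝ] ℝ, (∀ x y, g x y = g y x) ∧
        (∀ x : L, x ≠ 0 → 0 < g x x) ∧ (∀ x y, g (J x) (J y) = g x y) ∧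
        (∀ p q, g (f p) (f q) = if p = q then (1 : ℝ) else 0) := by
  have hc : 0 < (n : ℝ) + 1 - 2 * r := by
    have : (2 * r : ℝ) ≤ n := by exact_mod_cast hr3
    linarith
  have adapted_e := heisenberg_adapted (by omega) hr1 hJm hJp hf0 hfe
  have adapted_z : ∀ q, J (f (Sum.inr (q, false))) = -f (Sum.inr (q, true)) := fun q => by
    simpa only [hfz] using hJz q
  let e := Equiv.sumProdDistrib (Fin n) (Fin (k + 1)) Bool
  have adapted : ∀ a, J (f (e (a, false))) = -f (e (a, true))
    | Sum.inl i => adapted_e i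
    | Sum.inr q => adapted_z q
  obtain ⟨v, rfl⟩ := b.exists_coe_eq_of_smul (heisenberg_exists_smul_eq (by omega) hc hf0 hfe hfz)
  refine ⟨adapted_e, adapted_z, ?_, v.toDual, v.toDual_comm, fun x hx => v.toDual_self_pos hx,
    fun x y => ?_, v.toDual_apply⟩
  · rw [← e.sum_comp, sum_lie_apply_self_of_adapted hJ2 adapted, Fintype.sum_sum_type]
    simp only [e, Equiv.sumProdDistrib_apply_left, Equiv.sumProdDistrib_apply_right,
      heisenberg_lie_pair (by omega) hc.le hbr1 hf0 hfe, hfz, hbr4, ← Finset.sum_smul,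
      Finset.sum_const_zero, add_zero]
    rw [sum_heisenberg_weights hr1 (by omega), zero_smul, smul_zero]
  · rw [← v.toDual_reindex e.symm]
    exact toDual_apply_apply_of_adapted hJ2 _ (by simpa using adapted) x y
end

section
/- Let $\mathfrak{g}=\mathfrak{h}_{2n+1}\times\mathbb{R}^{2k+1}$ with basis $\{e_1,\ldots,e_{2n},z_0,\ldots,z_{2k+1}\}$, nonzero brackets $[e_{2i-1},e_{2i}]=z_0$, and let $J_n$ be the abelian complex structure with $J_ne_{2i-1}=-e_{2i}$ for all $i$ and $J_nz_{2j}=-z_{2j+1}$. Then for every $J_n$-adapted basis $\{f_1,\ldots,f_{2n},z_0',\ldots,z_{2k+1}'\}$ adapted to the splitting, one has $[f_{2i-1},f_{2i}]=\mu_i z_0$ with $\mu_i>0$ for each $i$; consequently $\sum_i[J_nf_i,f_i]\neq 0$ and no $J_n$-Hermitian metric on $\mathfrak{g}$ is balanced. -/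
/-!
In the basis `b`, the bracket `⁅J x, y⁆` is `z₀` times the Euclidean inner product of the
`e`-coordinates of `x` and `y`: both sides are bilinear, and on basis vectors this is the bracket
table, because the `z`'s are central and `J` swaps `e_{2i-1}` and `e_{2i}` up to sign. So
`⁅J x, x⁆` is a nonnegative multiple of `z₀`, and the multiple is positive unless `x` lies in the
span of the `z`'s. No basis lies in that span, so `∑ ⁅J fᵢ, fᵢ⁆ ≠ 0` for every basis. For an
adapted basis, `⁅f_{2i-1}, f_{2i}⁆ = ⁅J f_{2i-1}, f_{2i-1}⁆`.
-/

open Module Submodule Sum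

section CommRing

variable {R L ι κ : Type*} [CommRing R] [LieRing L] [LieAlgebra R L]

structure IsHeisenbergBasis (b : Basis ((ι × Bool) ⊕ κ) R L) (z : κ) : Prop where
  lie_inl_false_inl_true : ∀ i, ⁅b (inl (i, false)), b (inl (i, true))⁆ = b (inr z)
  lie_inl_inl_of_ne : ∀ i j, i ≠ j → ∀ s t, ⁅b (inl (i, s)), b (inl (j, t))⁆ = 0
  lie_inl_inr : ∀ p q, ⁅b (inl p), b (inr q)⁆ = 0
  lie_inr_inr : ∀ q q', ⁅b (inr q), b (inr q')⁆ = 0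

structure IsJAdapted (J : L →ₗ[R] L) (b : Basis ((ι × Bool) ⊕ (κ × Bool)) R L) : Prop where
  apply_inl : ∀ i, J (b (inl (i, false))) = -b (inl (i, true))
  apply_inr : ∀ q, J (b (inr (q, false))) = -b (inr (q, true))

noncomputable def heisenbergForm [Fintype ι] (b : Basis ((ι × Bool) ⊕ κ) R L) :
    L →ₗ[R] L →ₗ[R] R :=
  ∑ p : ι × Bool, (LinearMap.mul R R).compl₁₂ (b.coord (inl p)) (b.coord (inl p))

theorem heisenbergForm_apply [Fintype ι] (b : Basis ((ι × Bool) ⊕ κ) R L) (x y : L) :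
    heisenbergForm b x y = ∑ p : ι × Bool, b.repr x (inl p) * b.repr y (inl p) := by
  simp [heisenbergForm, LinearMap.sum_apply]

theorem apply_eq_of_apply_eq_neg {J : L →ₗ[R] L} (hJ2 : ∀ x, J (J x) = -x) {x y : L}
    (h : J x = -y) : J y = x := by
  rw [← neg_neg y, ← h, map_neg, hJ2, neg_neg]

theorem repr_inr_eq_zero_of_mem_span_inl {b : Basis (ι ⊕ κ) R L} {x : L}
    (hx : x ∈ span R (Set.range fun p => b (inl p))) (q : κ) : b.repr x (inr q) = 0 := by
  have : span R (Set.range fun p => b (inl p)) ≤ LinearMap.ker (b.coord (inr q)) :=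
    span_le.mpr <| by rintro _ ⟨p, rfl⟩; simp
  exact this hx

theorem IsHeisenbergBasis.lie_inr_left {b : Basis ((ι × Bool) ⊕ κ) R L} {z : κ}
    (hb : IsHeisenbergBasis b z) (q : κ) (j : (ι × Bool) ⊕ κ) : ⁅b (inr q), b j⁆ = 0 := by
  rcases j with p | q'
  · rw [← lie_skew, hb.lie_inl_inr, neg_zero]
  · exact hb.lie_inr_inr q q'

variable [Fintype ι] {b : Basis ((ι × Bool) ⊕ (κ × Bool)) R L} {z : κ × Bool}
  {J : L →ₗ[R] L}

theorem heisenbergForm_basis_inl_inl [DecidableEq ι] (p p' : ι × Bool) :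
    heisenbergForm b (b (inl p)) (b (inl p')) = if p = p' then 1 else 0 := by
  simp [heisenbergForm_apply, Finsupp.single_apply_left inl_injective, Finsupp.single_apply]

theorem heisenbergForm_basis_inr_left (q : κ × Bool) (y : L) :
    heisenbergForm b (b (inr q)) y = 0 := by
  simp [heisenbergForm_apply]

theorem IsHeisenbergBasis.lie_apply_basis_eq_heisenbergForm_smul (hb : IsHeisenbergBasis b z)
    (hJ2 : ∀ x, J (J x) = -x) (hJ : IsJAdapted J b) (i j : (ι × Bool) ⊕ (κ × Bool)) :
    ⁅J (b i), b j⁆ = heisenbergForm b (b i) (b j) • b (inr z) := by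
  classical
  have hJinl (m) : J (b (inl (m, true))) = b (inl (m, false)) :=
    apply_eq_of_apply_eq_neg hJ2 (hJ.apply_inl m)
  have hJinr (q) : J (b (inr (q, true))) = b (inr (q, false)) :=
    apply_eq_of_apply_eq_neg hJ2 (hJ.apply_inr q)
  have hlie_true_false (m) : ⁅b (inl (m, true)), b (inl (m, false))⁆ = -b (inr z) := by
    rw [← lie_skew, hb.lie_inl_false_inl_true]
  rcases i with ⟨m, s⟩ | ⟨q, s⟩
  · rcases j with ⟨m', t⟩ | q'
    · by_cases hm : m = m'
      · subst hm
        cases s <;> cases t <;> simp [heisenbergForm_basis_inl_inl, hJ.apply_inl, hJinl,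
          hlie_true_false, hb.lie_inl_false_inl_true]
      · cases s <;> simp [heisenbergForm_basis_inl_inl, hJ.apply_inl, hJinl,
          hb.lie_inl_inl_of_ne m m' hm, hm]
    · cases s <;> simp [heisenbergForm_apply, hJ.apply_inl, hJinl, hb.lie_inl_inr]
  · cases s <;> simp [heisenbergForm_basis_inr_left, hJ.apply_inr, hJinr, hb.lie_inr_left]

theorem IsHeisenbergBasis.lie_apply_eq_heisenbergForm_smul (hb : IsHeisenbergBasis b z)
    (hJ2 : ∀ x, J (J x) = -x) (hJ : IsJAdapted J b) (x y : L) :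
    ⁅J x, y⁆ = heisenbergForm b x y • b (inr z) := by
  have h : (LieModule.toEnd R L L : L →ₗ[R] Module.End R L) ∘ₗ J =
      (heisenbergForm b).compr₂ (LinearMap.toSpanSingleton R L (b (inr z))) :=
    LinearMap.ext_basis b b fun i j => by
      simpa using hb.lie_apply_basis_eq_heisenbergForm_smul hJ2 hJ i j
  simpa using LinearMap.congr_fun₂ h x y

end CommRing

section Ordered

variable {R L ι κ : Type*} [CommRing R] [LinearOrder R] [IsStrictOrderedRing R]
  [LieRing L] [LieAlgebra R L] [Fintype ι] {b : Basis ((ι × Bool) ⊕ κ) R L}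

theorem heisenbergForm_self_nonneg (x : L) : 0 ≤ heisenbergForm b x x := by
  rw [heisenbergForm_apply]
  exact Finset.sum_nonneg fun p _ => mul_self_nonneg _

theorem heisenbergForm_self_eq_zero_iff {x : L} :
    heisenbergForm b x x = 0 ↔ ∀ p, b.repr x (inl p) = 0 := by
  simp [heisenbergForm_apply, Finset.sum_eq_zero_iff_of_nonneg fun p _ => mul_self_nonneg _]

theorem heisenbergForm_self_pos_of_mem_span_inl {x : L}
    (hx : x ∈ span R (Set.range fun p => b (inl p))) (hx0 : x ≠ 0) :
    0 < heisenbergForm b x x := by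
  refine (heisenbergForm_self_nonneg x).lt_of_ne' fun h => hx0 <| b.repr.map_eq_zero_iff.mp ?_
  ext (p | q)
  · exact heisenbergForm_self_eq_zero_iff.mp h p
  · exact repr_inr_eq_zero_of_mem_span_inl hx q

theorem sum_heisenbergForm_basis_self_pos [Nonempty ι] {ι' : Type*} [Fintype ι']
    (c : Basis ι' R L) : 0 < ∑ p, heisenbergForm b (c p) (c p) := by
  refine (Finset.sum_nonneg fun p _ => heisenbergForm_self_nonneg (c p)).lt_of_ne' fun h => ?_
  have hzero (p : ι') : heisenbergForm b (c p) (c p) = 0 :=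
    (Finset.sum_eq_zero_iff_of_nonneg fun p _ => heisenbergForm_self_nonneg (c p)).mp h p
      (Finset.mem_univ p)
  obtain ⟨p₀⟩ : Nonempty (ι × Bool) := inferInstance
  have hcoord : b.coord (inl p₀) = 0 :=
    c.ext fun p => heisenbergForm_self_eq_zero_iff.mp (hzero p) p₀
  simpa using LinearMap.congr_fun hcoord (b (inl p₀))

end Ordered

/-- Let `𝔤 = 𝔥_{2n+1} × ℝ^{2k+1}` with basis `e₁, …, e_{2n}, z₀, …, z_{2k+1}` (nonzero
brackets `⁅e_{2i-1}, e_{2i}⁆ = z₀`; `e`'s indexed by `Fin n × Bool`, `z`'s by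
`Fin (k+1) × Bool` with `z₀ ↦ (0, false)`), and let `J_n` be the abelian complex
structure with `J_n e_{2i-1} = -e_{2i}` for all `i` and `J_n z_{2j} = -z_{2j+1}`.
Then for every `J_n`-adapted basis `f₁, …, f_{2n}, z₀', …, z_{2k+1}'` adapted to the
splitting, each `⁅f_{2i-1}, f_{2i}⁆` is a positive multiple `μᵢ z₀` of `z₀`;
consequently `∑ᵢ ⁅J_n fᵢ, fᵢ⁆ ≠ 0`, and no `J_n`-Hermitian metric on `𝔤` is balanced
(for every compatible inner product, every orthonormal basis `w` has
`∑ᵢ ⁅J_n wᵢ, wᵢ⁆ ≠ 0`). -/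
theorem heisenberg_J0_not_balanced {L : Type*} [LieRing L] [LieAlgebra ℝ L]
    (n k : ℕ) (hn : 0 < n)
    (b : Module.Basis ((Fin n × Bool) ⊕ (Fin (k + 1) × Bool)) ℝ L)
    (hbr1 : ∀ i : Fin n, ⁅b (Sum.inl (i, false)), b (Sum.inl (i, true))⁆ =
      b (Sum.inr (⟨0, Nat.succ_pos k⟩, false)))
    (hbr2 : ∀ i j : Fin n, i ≠ j → ∀ s t : Bool,
      ⁅b (Sum.inl (i, s)), b (Sum.inl (j, t))⁆ = 0)
    (hbr3 : ∀ p q, ⁅b (Sum.inl p), b (Sum.inr q)⁆ = 0)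
    (hbr4 : ∀ q q', ⁅b (Sum.inr q), b (Sum.inr q')⁆ = 0)
    -- the abelian complex structure J_n
    (J : L →ₗ[ℝ] L) (hJ2 : ∀ x, J (J x) = -x)
    (hJe : ∀ i : Fin n, J (b (Sum.inl (i, false))) = -b (Sum.inl (i, true)))
    (hJz : ∀ q : Fin (k + 1), J (b (Sum.inr (q, false))) = -b (Sum.inr (q, true))) :
    (∀ c : Module.Basis ((Fin n × Bool) ⊕ (Fin (k + 1) × Bool)) ℝ L,
      -- `c` is `J_n`-adapted …
      (∀ i : Fin n, J (c (Sum.inl (i, false))) = -c (Sum.inl (i, true))) →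
      (∀ q : Fin (k + 1), J (c (Sum.inr (q, false))) = -c (Sum.inr (q, true))) →
      -- … and adapted to the splitting
      (∀ p, c (Sum.inl p) ∈
        Submodule.span ℝ (Set.range fun p' : Fin n × Bool => b (Sum.inl p'))) →
      (∀ q, c (Sum.inr q) ∈
        Submodule.span ℝ (Set.range fun q' : Fin (k + 1) × Bool => b (Sum.inr q'))) →
      (∀ i : Fin n, ∃ μ : ℝ, 0 < μ ∧
        ⁅c (Sum.inl (i, false)), c (Sum.inl (i, true))⁆ =
          μ • b (Sum.inr (⟨0, Nat.succ_pos k⟩, false))) ∧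
      ∑ p : (Fin n × Bool) ⊕ (Fin (k + 1) × Bool), ⁅J (c p), c p⁆ ≠ 0) ∧
    ∀ g : L →ₗ[ℝ] L →ₗ[ℝ] ℝ, (∀ x y, g x y = g y x) →
      (∀ x : L, x ≠ 0 → 0 < g x x) → (∀ x y, g (J x) (J y) = g x y) →
      ∀ w : Module.Basis ((Fin n × Bool) ⊕ (Fin (k + 1) × Bool)) ℝ L,
        (∀ p q, g (w p) (w q) = if p = q then (1 : ℝ) else 0) →
        ∑ p : (Fin n × Bool) ⊕ (Fin (k + 1) × Bool), ⁅J (w p), w p⁆ ≠ 0 := by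
  have hb : IsHeisenbergBasis b _ := ⟨hbr1, hbr2, hbr3, hbr4⟩
  have hlie := hb.lie_apply_eq_heisenbergForm_smul hJ2 ⟨hJe, hJz⟩
  have : Nonempty (Fin n) := ⟨⟨0, hn⟩⟩
  have hunbalanced (c : Module.Basis ((Fin n × Bool) ⊕ (Fin (k + 1) × Bool)) ℝ L) :
      ∑ p, ⁅J (c p), c p⁆ ≠ 0 := by
    simp only [hlie, ← Finset.sum_smul]
    exact smul_ne_zero (sum_heisenbergForm_basis_self_pos c).ne' (b.ne_zero _)
  refine ⟨fun c hcJe _ hce _ => ⟨fun i => ?_, hunbalanced c⟩, fun _ _ _ _ w _ => hunbalanced w⟩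
  refine ⟨_, heisenbergForm_self_pos_of_mem_span_inl (hce (i, false)) (c.ne_zero _), ?_⟩
  rw [← neg_neg (c (Sum.inl (i, true))), ← hcJe, lie_neg, lie_skew, hlie]
end

section
/- Let $A$ be a finite-dimensional nilpotent commutative associative real algebra with an inner product, extended to $\mathrm{aff}(A)=A\oplus A$ as the orthogonal direct sum. Let $J(a,b)=(b,-a)$ be the standard abelian complex structure. Then the resulting Hermitian structure on $\mathrm{aff}(A)$ is balanced if and only if there exists an orthonormal basis $\{e_1,\ldots,e_n\}$ of $A$ with $\sum_{i=1}^n e_i^2=0$. -/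
/-- The bracket of `aff(A) = A ⊕ A`: `[(a,b), (a',b')] = (0, ab' - ba')`. -/
def affBracket {A : Type*} [NonUnitalCommRing A] (u v : A × A) : A × A :=
  (0, u.1 * v.2 - u.2 * v.1)

/-- The standard abelian complex structure on `aff(A)`: `J(a,b) = (b,-a)`. -/
def affJ {A : Type*} [NonUnitalCommRing A] (u : A × A) : A × A :=
  (u.2, -u.1)

/-- Iterated product `a * a * ⋯ * a` (`m+1` factors) in a non-unital ring. -/
def iterProd {A : Type*} [NonUnitalCommRing A] (a : A) : ℕ → A
  | 0 => a
  | m + 1 => iterProd a m * a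

/-!
Since `[J u, u] = (0, a² + b²)` for `u = (a, b)`, the balancedness sum `∑ᵢ [J wᵢ, wᵢ]` is
`(0, ∑ᵢ B(wᵢ, wᵢ))` for the bilinear map `B(u, v) = u₁v₁ + u₂v₂`. Such a trace of a bilinear map
over an orthonormal basis does not depend on the basis, and over the product basis `(eᵢ, 0), (0, eᵢ)`
built from an orthonormal basis `e` of `A` it equals `2 ∑ᵢ eᵢ²`.
-/

namespace LinearMap

variable {R V V' W ι κ : Type*} [CommRing R]
  [AddCommGroup V] [Module R V] [AddCommGroup V'] [Module R V'] [AddCommGroup W] [Module R W]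

def IsOrthonormal [DecidableEq ι] (g : V →ₗ[R] V →ₗ[R] R) (b : ι → V) : Prop :=
  ∀ i j, g (b i) (b j) = if i = j then 1 else 0

def orthogonalSum (f : V →ₗ[R] V →ₗ[R] W) (h : V' →ₗ[R] V' →ₗ[R] W) :
    V × V' →ₗ[R] V × V' →ₗ[R] W :=
  f.compl₁₂ (fst R V V') (fst R V V') + h.compl₁₂ (snd R V V') (snd R V V')

@[simp]
lemma orthogonalSum_apply (f : V →ₗ[R] V →ₗ[R] W) (h : V' →ₗ[R] V' →ₗ[R] W) (u v : V × V') :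
    f.orthogonalSum h u v = f u.1 v.1 + h u.2 v.2 :=
  rfl

namespace IsOrthonormal

variable [DecidableEq ι] [DecidableEq κ] {g : V →ₗ[R] V →ₗ[R] R}

lemma comp_injective {b : ι → V} (hb : g.IsOrthonormal b) {σ : κ → ι}
    (hσ : Function.Injective σ) : g.IsOrthonormal (b ∘ σ) := fun i j => by
  simp only [Function.comp_apply, hb (σ i) (σ j), hσ.eq_iff]

lemma orthogonalSum {g' : V' →ₗ[R] V' →ₗ[R] R} {e : Module.Basis ι R V}
    {e' : Module.Basis κ R V'} (he : g.IsOrthonormal e) (he' : g'.IsOrthonormal e') :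
    (g.orthogonalSum g').IsOrthonormal (e.prod e') := by
  rintro (i | i) (j | j) <;> simp [Module.Basis.prod_apply, he _ _, he' _ _]

variable [Fintype ι] [Fintype κ]

lemma repr_apply {b : Module.Basis ι R V} (hb : g.IsOrthonormal b) (x : V) (i : ι) :
    b.repr x i = g x (b i) := by
  conv_rhs => rw [← b.sum_repr x]
  simp [hb _ _, -Module.Basis.sum_repr]

lemma sum_smul {b : Module.Basis ι R V} (hb : g.IsOrthonormal b) (x : V) :
    ∑ i, g x (b i) • b i = x := by
  simp only [← hb.repr_apply, b.sum_repr]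

lemma sum_apply_self_eq (hg : ∀ x y, g x y = g y x) (B : V →ₗ[R] V →ₗ[R] W)
    {v : Module.Basis ι R V} {w : Module.Basis κ R V}
    (hv : g.IsOrthonormal v) (hw : g.IsOrthonormal w) :
    ∑ i, B (v i) (v i) = ∑ j, B (w j) (w j) := by
  calc ∑ i, B (v i) (v i)
      = ∑ i, B (∑ j, g (v i) (w j) • w j) (v i) := by simp only [hw.sum_smul]
    _ = ∑ j, ∑ i, g (w j) (v i) • B (w j) (v i) := by
        simp only [map_sum, map_smul, sum_apply, smul_apply, hg (v _)]
        exact Finset.sum_comm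
    _ = ∑ j, B (w j) (w j) := by
        simp only [← map_smul, ← map_sum, hv.sum_smul]

end IsOrthonormal

lemma exists_basis_isOrthonormal {E : Type*} [AddCommGroup E] [Module ℝ E]
    [FiniteDimensional ℝ E] (g : E →ₗ[ℝ] E →ₗ[ℝ] ℝ) (hsymm : ∀ x y, g x y = g y x)
    (hpos : ∀ x, x ≠ 0 → 0 < g x x) :
    ∃ e : Module.Basis (Fin (Module.finrank ℝ E)) ℝ E, g.IsOrthonormal e := by
  let core : InnerProductSpace.Core ℝ E :=
    { inner x y := g x y
      conj_inner_symm x y := hsymm y x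
      re_inner_nonneg x := by
        rcases eq_or_ne x 0 with rfl | hx
        · simp
        · exact (hpos x hx).le
      definite x hx := by_contra fun h => (hpos x h).ne' hx
      add_left x y z := by simp
      smul_left x y r := by simp }
  let _ : NormedAddCommGroup E := core.toNormedAddCommGroup
  let _ : InnerProductSpace ℝ E := .ofCore core.toCore
  refine ⟨(stdOrthonormalBasis ℝ E).toBasis, fun i j => ?_⟩
  rw [OrthonormalBasis.coe_toBasis]
  exact orthonormal_iff_ite.mp (stdOrthonormalBasis ℝ E).orthonormal i j

end LinearMap

section Aff

variable {A : Type*} [NonUnitalCommRing A] [Module ℝ A] [IsScalarTower ℝ A A]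
  [SMulCommClass ℝ A A]

lemma affBracket_affJ_self (u : A × A) :
    affBracket (affJ u) u = (0, (LinearMap.mul ℝ A).orthogonalSum (LinearMap.mul ℝ A) u u) := by
  simp [affBracket, affJ, add_comm]

lemma sum_affBracket_affJ {ι κ : Type*} [Fintype ι] [DecidableEq ι] [Fintype κ] [DecidableEq κ]
    {gA : A →ₗ[ℝ] A →ₗ[ℝ] ℝ} (hsymm : ∀ x y, gA x y = gA y x)
    {w : Module.Basis ι ℝ (A × A)} (hw : (gA.orthogonalSum gA).IsOrthonormal w)
    {e : Module.Basis κ ℝ A} (he : gA.IsOrthonormal e) :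
    ∑ i, affBracket (affJ (w i)) (w i) = (0, (2 : ℝ) • ∑ i, e i * e i) := by
  have hsymm' : ∀ x y, gA.orthogonalSum gA x y = gA.orthogonalSum gA y x := fun x y => by
    simp [hsymm x.1, hsymm x.2]
  simp only [affBracket_affJ_self]
  ext
  · simp [Prod.fst_sum]
  · rw [Prod.snd_sum, ← (he.orthogonalSum he).sum_apply_self_eq hsymm' _ hw,
      Fintype.sum_sum_type]
    simp [Module.Basis.prod_apply, two_smul]

end Aff

theorem aff_balanced_iff_orthonormal_sum_squares_zero_general {A : Type*}
    [NonUnitalCommRing A] [Module ℝ A] [IsScalarTower ℝ A A] [SMulCommClass ℝ A A]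
    [FiniteDimensional ℝ A]
    -- the inner product on `A`
    (gA : A →ₗ[ℝ] A →ₗ[ℝ] ℝ) (hsymm : ∀ x y, gA x y = gA y x)
    (hpos : ∀ x : A, x ≠ 0 → 0 < gA x x) :
    (∃ w : Module.Basis (Fin (2 * Module.finrank ℝ A)) ℝ (A × A),
      (∀ i j, gA (w i).1 (w j).1 + gA (w i).2 (w j).2 =
        if i = j then (1 : ℝ) else 0) ∧
      ∑ i, affBracket (affJ (w i)) (w i) = 0) ↔
    (∃ e : Module.Basis (Fin (Module.finrank ℝ A)) ℝ A,
      (∀ i j, gA (e i) (e j) = if i = j then (1 : ℝ) else 0) ∧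
      ∑ i, e i * e i = 0) := by
  constructor
  · rintro ⟨w, hw : (gA.orthogonalSum gA).IsOrthonormal w, hsum⟩
    obtain ⟨e, he⟩ := gA.exists_basis_isOrthonormal hsymm hpos
    refine ⟨e, he, ?_⟩
    rw [sum_affBracket_affJ hsymm hw he, Prod.mk_eq_zero] at hsum
    exact (smul_eq_zero.mp hsum.2).resolve_left two_ne_zero
  · rintro ⟨e, he : gA.IsOrthonormal e, hsum⟩
    let σ := finSumFinEquiv.trans (finCongr (two_mul (Module.finrank ℝ A)).symm)
    have hw : (gA.orthogonalSum gA).IsOrthonormal ((e.prod e).reindex σ) := by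
      rw [Module.Basis.coe_reindex]
      exact (he.orthogonalSum he).comp_injective σ.symm.injective
    refine ⟨(e.prod e).reindex σ, hw, ?_⟩
    rw [sum_affBracket_affJ hsymm hw he, hsum, smul_zero, Prod.mk_zero_zero]

/-- Let `A` be a finite-dimensional nilpotent commutative associative real algebra with
an inner product `⟨·,·⟩`, extended to `aff(A) = A ⊕ A` as the orthogonal direct sum
`g((a,b),(a',b')) = ⟨a,a'⟩ + ⟨b,b'⟩`, and let `J(a,b) = (b,-a)` be the standard abelian
complex structure.  The resulting Hermitian structure on `aff(A)` is balanced (i.e.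
`∑ᵢ ⁅J wᵢ, wᵢ⁆ = 0` for an orthonormal basis `w` of `aff(A)`, the balancedness
criterion on unimodular Lie algebras) if and only if there is an orthonormal basis
`e₁, …, eₙ` of `A` with `∑ᵢ eᵢ² = 0`. -/
theorem aff_balanced_iff_orthonormal_sum_squares_zero {A : Type*}
    [NonUnitalCommRing A] [Module ℝ A] [IsScalarTower ℝ A A] [SMulCommClass ℝ A A]
    [FiniteDimensional ℝ A]
    -- `A` is nilpotent (for finite-dimensional commutative algebras this is
    -- equivalent to every element being nilpotent)
    (hnil : ∀ a : A, ∃ m : ℕ, iterProd a m = 0)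
    -- the inner product on `A`
    (gA : A →ₗ[ℝ] A →ₗ[ℝ] ℝ) (hsymm : ∀ x y, gA x y = gA y x)
    (hpos : ∀ x : A, x ≠ 0 → 0 < gA x x) :
    (∃ w : Module.Basis (Fin (2 * Module.finrank ℝ A)) ℝ (A × A),
      (∀ i j, gA (w i).1 (w j).1 + gA (w i).2 (w j).2 =
        if i = j then (1 : ℝ) else 0) ∧
      ∑ i, affBracket (affJ (w i)) (w i) = 0) ↔
    (∃ e : Module.Basis (Fin (Module.finrank ℝ A)) ℝ A,
      (∀ i j, gA (e i) (e j) = if i = j then (1 : ℝ) else 0) ∧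
      ∑ i, e i * e i = 0) :=
  aff_balanced_iff_orthonormal_sum_squares_zero_general gA hsymm hpos
end
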